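/- arXiv:1312.3753 — 5 statements merged into one kernel-verified Lean document; each statement's English description precedes it below -/
import Mathlib

section
/- If u is a smooth classical solution of the shallow-water equation (CH) u_t + u_x + 6 u u_x - 6 u² u_x + 12 u³ u_x + u_{xxx} - u_{xxt} + 14 u u_{xxx} + 28 u_x u_{xx} = 0 on [0,T) × 𝕊, then the H¹ norm of u is conserved in time: ‖u(t,·)‖_{H^1} = ‖u(0,·)‖_{H^1} for all t ∈ [0,T). Equivalently, the quantity ∫_𝕊 ( u(t,x)² + u_x(t,x)² ) dx is independent of t. -/
open MeasureTheory Filter intervalIntegral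
open scoped ENNReal

/-- The `k`-th Fourier coefficient of a (2π-periodic) function `f : ℝ → ℝ`,
    `f̂(k) = (2π)^{-1/2} ∫_0^{2π} f(x) e^{-ikx} dx`. -/
noncomputable def fourierCoef (f : ℝ → ℝ) (k : ℤ) : ℂ :=
  (((2 * Real.pi) ^ (-(1:ℝ)/2) : ℝ) : ℂ) *
    ∫ x in (0:ℝ)..(2 * Real.pi), (f x : ℂ) * Complex.exp (-Complex.I * k * x)

/-- The Sobolev `H^σ` norm of a function on the circle. -/
noncomputable def sobolevNorm (σ : ℝ) (f : ℝ → ℝ) : ℝ :=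
  Real.sqrt (∑' k : ℤ, (1 + (k : ℝ) ^ 2) ^ σ * ‖fourierCoef f k‖ ^ 2)

/-- The Fourier multiplier `Λ^r` with symbol `(1+k²)^{r/2}`. -/
noncomputable def lam (r : ℝ) (f : ℝ → ℝ) (x : ℝ) : ℝ :=
  (((((2 * Real.pi) ^ (-(1:ℝ)/2) : ℝ) : ℂ)) * ∑' k : ℤ,
    ((((1 + (k : ℝ) ^ 2) ^ (r / 2) : ℝ) : ℂ)) * fourierCoef f k *
      Complex.exp (Complex.I * k * x)).re

/-- Partial derivative in the first (time) variable. -/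
noncomputable def pt (u : ℝ → ℝ → ℝ) : ℝ → ℝ → ℝ := fun t x => deriv (fun s => u s x) t

/-- Partial derivative in the second (space) variable. -/
noncomputable def px (u : ℝ → ℝ → ℝ) : ℝ → ℝ → ℝ := fun t x => deriv (fun y => u t y) x

/-- `R(u) = 7 u_x² - 3 u⁴ + 2 u³ - 10 u² - 2 u`. -/
noncomputable def Rop (f : ℝ → ℝ) : ℝ → ℝ := fun x =>
  7 * (deriv f x) ^ 2 - 3 * (f x) ^ 4 + 2 * (f x) ^ 3 - 10 * (f x) ^ 2 - 2 * f x

/-- A smooth classical solution of (PB) `u_t = u_x + 14 u u_x + ∂_x Λ^{-2} R(u)`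
    for times in `I`, 2π-periodic in space. -/
def IsSolutionPBOn (u : ℝ → ℝ → ℝ) (I : Set ℝ) : Prop :=
  ContDiff ℝ (⊤ : ℕ∞) (Function.uncurry u) ∧
  (∀ t, Function.Periodic (u t) (2 * Real.pi)) ∧
  ∀ t ∈ I, ∀ x : ℝ,
    pt u t x = px u t x + 14 * u t x * px u t x + deriv (lam (-2) (Rop (u t))) x

/-- A smooth classical solution of (CH) for times in `I`, 2π-periodic in space. -/
def IsSolutionCHOn (u : ℝ → ℝ → ℝ) (I : Set ℝ) : Prop :=
  ContDiff ℝ (⊤ : ℕ∞) (Function.uncurry u) ∧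
  (∀ t, Function.Periodic (u t) (2 * Real.pi)) ∧
  ∀ t ∈ I, ∀ x : ℝ,
    pt u t x + px u t x + 6 * u t x * px u t x - 6 * (u t x) ^ 2 * px u t x
      + 12 * (u t x) ^ 3 * px u t x + px (px (px u)) t x - pt (px (px u)) t x
      + 14 * u t x * px (px (px u)) t x + 28 * px u t x * px (px u) t x = 0

/-- The approximate solutions `u^{ω,n}(t,x) = (ω n⁻¹ - 1 - n^{-s} cos(nx + ωt))/14`. -/
noncomputable def uapprox (s : ℝ) (ω : ℝ) (n : ℕ) (t x : ℝ) : ℝ :=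
  (ω * (n : ℝ)⁻¹ - 1 - (n : ℝ) ^ (-s) * Real.cos (n * x + ω * t)) / 14


lemma parseval_basic {f : ℝ → ℝ} (hf : Continuous f)
    (hp : Function.Periodic f (2 * Real.pi)) :
    Summable (fun k : ℤ => ‖fourierCoef f k‖ ^ 2) ∧
    ∑' k : ℤ, ‖fourierCoef f k‖ ^ 2
      = ∫ x in (0:ℝ)..(2 * Real.pi), f x ^ 2 := by
  haveI : Fact (0 < 2 * Real.pi) := ⟨by positivity⟩
  have hpc : Function.Periodic (fun x => (f x : ℂ)) (2 * Real.pi) := fun x => by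
    simp [hp x]
  set G : AddCircle (2 * Real.pi) → ℂ := hpc.lift with hGdef
  have hGcoe : ∀ x : ℝ, G (x : AddCircle (2 * Real.pi)) = (f x : ℂ) := fun x =>
    hpc.lift_coe x
  have hGc : Continuous G := by
    rw [(QuotientAddGroup.isQuotientMap_mk _).continuous_iff]
    exact Complex.continuous_ofReal.comp hf
  set Gc : C(AddCircle (2 * Real.pi), ℂ) := ⟨G, hGc⟩ with hGcdef
  set L := ContinuousMap.toLp (E := ℂ) 2 (AddCircle.haarAddCircle) ℂ Gc with hLdef
  have hcoeff : ∀ k : ℤ, fourierCoeff (L : AddCircle (2 * Real.pi) → ℂ) k = fourierCoeff G k := by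
    intro k
    exact fourierCoeff_toLp Gc k
  have key : ∀ k : ℤ, fourierCoef f k
      = ((Real.sqrt (2 * Real.pi) : ℝ) : ℂ) * fourierCoeff G k := by
    intro k
    rw [fourierCoeff_eq_intervalIntegral G k 0]
    rw [zero_add]
    have hint : ∀ x : ℝ, (fourier (-k) (x : AddCircle (2 * Real.pi))) • G x
        = (f x : ℂ) * Complex.exp (-Complex.I * k * x) := by
      intro x
      rw [hGcoe x, fourier_coe_apply, smul_eq_mul, mul_comm]
      congr 2
      have h2 : (2 * (Real.pi : ℂ)) ≠ 0 := by
        simp [Complex.ofReal_ne_zero, Real.pi_ne_zero]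
      push_cast
      field_simp
    simp_rw [hint]
    rw [fourierCoef, Complex.real_smul]
    have hc : ((2 * Real.pi) ^ (-(1:ℝ)/2) : ℝ) = Real.sqrt (2 * Real.pi) * (1 / (2 * Real.pi)) := by
      rw [Real.sqrt_eq_rpow, show -(1:ℝ)/2 = 1/2 + (-1) by norm_num,
        Real.rpow_add (by positivity), Real.rpow_neg_one]
      ring
    rw [hc]
    push_cast
    ring
  have keyabs : ∀ k : ℤ, ‖fourierCoef f k‖ ^ 2
      = (2 * Real.pi) * ‖fourierCoeff G k‖ ^ 2 := by
    intro k
    rw [key k, norm_mul, mul_pow, Complex.norm_real, Real.norm_eq_abs, abs_of_nonneg (Real.sqrt_nonneg _),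
      Real.sq_sqrt (by positivity)]
  have hsum : Summable (fun k : ℤ => ‖fourierCoeff G k‖ ^ 2) := by
    have hm := lp.memℓp (fourierBasis.repr L)
    have hs := (memℓp_gen_iff (p := 2) (by norm_num)).1 hm
    have heq : ∀ k : ℤ, ‖(fourierBasis.repr L) k‖ ^ (2:ℝ≥0∞).toReal = ‖fourierCoeff G k‖ ^ 2 := by
      intro k
      rw [fourierBasis_repr, hcoeff k]
      norm_num
    exact hs.congr heq
  have hpar := tsum_sq_fourierCoeff L
  have h1 : ∫ t, ‖(L : AddCircle (2 * Real.pi) → ℂ) t‖ ^ 2 ∂(AddCircle.haarAddCircle)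
      = ∫ t, ‖G t‖ ^ 2 ∂(AddCircle.haarAddCircle) := by
    apply MeasureTheory.integral_congr_ae
    filter_upwards [ContinuousMap.coeFn_toLp (p := 2) (𝕜 := ℂ) (AddCircle.haarAddCircle) Gc] with t ht
    rw [ht]; rfl
  have h2 : (∫ x in (0:ℝ)..(2 * Real.pi), f x ^ 2)
      = (2 * Real.pi) * ∫ t, ‖G t‖ ^ 2 ∂(AddCircle.haarAddCircle) := by
    have h3 := AddCircle.intervalIntegral_preimage (2 * Real.pi) 0
      (fun z => ‖G z‖ ^ 2)
    rw [zero_add] at h3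
    have h4 : ∀ x : ℝ, ‖G (x : AddCircle (2 * Real.pi))‖ ^ 2 = f x ^ 2 := by
      intro x
      rw [hGcoe x, Complex.norm_real, Real.norm_eq_abs, sq_abs]
    simp_rw [h4] at h3
    rw [h3, AddCircle.volume_eq_smul_haarAddCircle, MeasureTheory.integral_smul_measure,
      ENNReal.toReal_ofReal (by positivity), smul_eq_mul]
  constructor
  · exact Summable.congr (hsum.mul_left (2 * Real.pi)) (fun k => (keyabs k).symm)
  · calc ∑' k : ℤ, ‖fourierCoef f k‖ ^ 2
        = ∑' k : ℤ, (2 * Real.pi) * ‖fourierCoeff G k‖ ^ 2 := by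
          exact tsum_congr keyabs
      _ = (2 * Real.pi) * ∑' k : ℤ, ‖fourierCoeff G k‖ ^ 2 := tsum_mul_left
      _ = (2 * Real.pi) * ∫ t, ‖G t‖ ^ 2 ∂(AddCircle.haarAddCircle) := by
          rw [← h1]
          congr 1
          rw [← hpar]
          exact tsum_congr (fun k => by rw [hcoeff k])
      _ = ∫ x in (0:ℝ)..(2 * Real.pi), f x ^ 2 := h2.symm

lemma fourierCoef_deriv {f : ℝ → ℝ} (hf : ContDiff ℝ (⊤ : ℕ∞) f)
    (hp : Function.Periodic f (2 * Real.pi)) (k : ℤ) :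
    fourierCoef (deriv f) k = Complex.I * k * fourierCoef f k := by
  have hder : ∀ x : ℝ, HasDerivAt (fun y : ℝ => (f y : ℂ)) ((deriv f x : ℝ) : ℂ) x := by
    intro x
    exact ((hf.differentiable (by simp) x).hasDerivAt).ofReal_comp
  have hexp : ∀ x : ℝ, HasDerivAt (fun y : ℝ => Complex.exp (-Complex.I * k * y))
      (-Complex.I * k * Complex.exp (-Complex.I * k * x)) x := by
    intro x
    have h1 : HasDerivAt (fun y : ℝ => ((y : ℂ))) 1 x := Complex.ofRealCLM.hasDerivAt
    have h2 : HasDerivAt (fun y : ℝ => (-Complex.I * k * y)) (-Complex.I * k) x := by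
      simpa using h1.const_mul (-Complex.I * (k : ℂ))
    simpa [mul_comm, Function.comp_def] using (Complex.hasDerivAt_exp _).comp x h2
  have hcont : Continuous fun x : ℝ => Complex.exp (-Complex.I * k * x) :=
    Complex.continuous_exp.comp (by continuity)
  have hibp := integral_deriv_mul_eq_sub_of_hasDerivAt (a := 0) (b := 2 * Real.pi)
    (u := fun y : ℝ => (f y : ℂ)) (v := fun y : ℝ => Complex.exp (-Complex.I * k * y))
    (u' := fun y : ℝ => ((deriv f y : ℝ) : ℂ))
    (v' := fun y : ℝ => -Complex.I * k * Complex.exp (-Complex.I * k * y))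
    ((Complex.continuous_ofReal.comp hf.continuous).continuousOn)
    hcont.continuousOn
    (fun x _ => hder x) (fun x _ => hexp x)
    ((Complex.continuous_ofReal.comp (hf.continuous_deriv (by simp))).intervalIntegrable _ _)
    ((continuous_const.mul hcont).intervalIntegrable _ _)
  have h2 : f (2 * Real.pi) = f 0 := by
    have := hp 0
    rwa [zero_add] at this
  have h3 : Complex.exp (-Complex.I * (k:ℂ) * (2 * (Real.pi:ℂ))) = 1 := by
    rw [show (-Complex.I * (k:ℂ) * (2 * (Real.pi:ℂ)))
        = ((-k : ℤ):ℂ) * (2 * (Real.pi:ℂ) * Complex.I) by push_cast; ring]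
    exact Complex.exp_int_mul_two_pi_mul_I _
  push_cast at hibp
  rw [h2, h3] at hibp
  simp only [Complex.ofReal_zero, mul_zero, Complex.exp_zero, mul_one, sub_self] at hibp
  have c1 : Continuous fun x : ℝ => ((deriv f x : ℝ) : ℂ) :=
    Complex.continuous_ofReal.comp (hf.continuous_deriv (by simp))
  have c2 : Continuous fun x : ℝ => ((f x : ℝ) : ℂ) :=
    Complex.continuous_ofReal.comp hf.continuous
  have i1 : IntervalIntegrable (fun x : ℝ => ((deriv f x : ℝ):ℂ) * Complex.exp (-Complex.I * k * x))
      volume 0 (2 * Real.pi) := (c1.mul hcont).intervalIntegrable _ _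
  have i2 : IntervalIntegrable
      (fun x : ℝ => ((f x : ℝ):ℂ) * (-Complex.I * k * Complex.exp (-Complex.I * k * x)))
      volume 0 (2 * Real.pi) := (c2.mul (continuous_const.mul hcont)).intervalIntegrable _ _
  rw [intervalIntegral.integral_add i1 i2] at hibp
  have hB : (∫ x in (0:ℝ)..(2 * Real.pi), ((f x : ℝ):ℂ) * (-Complex.I * k * Complex.exp (-Complex.I * k * x)))
      = (-Complex.I * k) * ∫ x in (0:ℝ)..(2 * Real.pi), (f x : ℂ) * Complex.exp (-Complex.I * k * x) := by
    rw [← intervalIntegral.integral_const_mul]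
    apply intervalIntegral.integral_congr
    intro x _
    ring
  rw [hB] at hibp
  rw [fourierCoef, fourierCoef]
  have hD : (∫ x in (0:ℝ)..(2 * Real.pi), ((deriv f x : ℝ) : ℂ) * Complex.exp (-Complex.I * k * x))
      = Complex.I * k * ∫ x in (0:ℝ)..(2 * Real.pi), (f x : ℂ) * Complex.exp (-Complex.I * k * x) := by
    linear_combination hibp
  rw [hD]
  ring

lemma periodic_deriv' {f : ℝ → ℝ} (hp : Function.Periodic f (2 * Real.pi)) :
    Function.Periodic (deriv f) (2 * Real.pi) := by
  intro x
  have hfun : (fun y : ℝ => f (y + 2 * Real.pi)) = f := funext hp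
  calc deriv f (x + 2 * Real.pi) = deriv (fun y : ℝ => f (y + 2 * Real.pi)) x :=
        (deriv_comp_add_const _ _ _).symm
    _ = deriv f x := by rw [hfun]

lemma sobolev_one_sum {f : ℝ → ℝ} (hf : ContDiff ℝ (⊤ : ℕ∞) f)
    (hp : Function.Periodic f (2 * Real.pi)) :
    ∑' k : ℤ, (1 + (k : ℝ) ^ 2) ^ (1:ℝ) * ‖fourierCoef f k‖ ^ 2
      = ∫ x in (0:ℝ)..(2 * Real.pi), (f x ^ 2 + deriv f x ^ 2) := by
  obtain ⟨s1, e1⟩ := parseval_basic hf.continuous hp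
  obtain ⟨s2, e2⟩ := parseval_basic (hf.continuous_deriv (by simp)) (periodic_deriv' hp)
  have hterm : ∀ k : ℤ, (1 + (k : ℝ) ^ 2) ^ (1:ℝ) * ‖fourierCoef f k‖ ^ 2
      = ‖fourierCoef f k‖ ^ 2 + ‖fourierCoef (deriv f) k‖ ^ 2 := by
    intro k
    have hd : ‖fourierCoef (deriv f) k‖ ^ 2
        = (k : ℝ) ^ 2 * ‖fourierCoef f k‖ ^ 2 := by
      rw [fourierCoef_deriv hf hp k, norm_mul, norm_mul, Complex.norm_I, Complex.norm_intCast]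
      rw [mul_pow, mul_pow, one_pow, sq_abs]
      ring
    rw [hd, Real.rpow_one]
    ring
  rw [tsum_congr hterm, Summable.tsum_add s1 s2, e1, e2]
  rw [← intervalIntegral.integral_add (f := fun x => f x ^ 2) (g := fun x => deriv f x ^ 2)
    ((hf.continuous.pow 2).intervalIntegrable _ _)
    (((hf.continuous_deriv (by simp)).pow 2).intervalIntegrable _ _)]


section calculus
variable {v : ℝ → ℝ → ℝ}

lemma hasDerivAt_px (h : ContDiff ℝ (⊤ : ℕ∞) (Function.uncurry v)) (t x : ℝ) :
    HasDerivAt (fun y => v t y) (px v t x) x := by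
  have h1 : HasDerivAt (fun y : ℝ => ((t, y) : ℝ × ℝ)) (0, 1) x :=
    (hasDerivAt_const x t).prodMk (hasDerivAt_id x)
  have H : HasDerivAt (fun y => v t y) (fderiv ℝ (Function.uncurry v) (t, x) (0, 1)) x :=
    ((h.differentiable (by simp) (t, x)).hasFDerivAt).comp_hasDerivAt x h1
  show HasDerivAt _ (deriv (fun y => v t y) x) x
  rw [H.deriv]
  exact H

lemma hasDerivAt_pt (h : ContDiff ℝ (⊤ : ℕ∞) (Function.uncurry v)) (t x : ℝ) :
    HasDerivAt (fun s => v s x) (pt v t x) t := by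
  have h1 : HasDerivAt (fun s : ℝ => ((s, x) : ℝ × ℝ)) (1, 0) t :=
    (hasDerivAt_id t).prodMk (hasDerivAt_const t x)
  have H : HasDerivAt (fun s => v s x) (fderiv ℝ (Function.uncurry v) (t, x) (1, 0)) t := by
    have hd : Differentiable ℝ (Function.uncurry v) := h.differentiable (by simp)
    exact ((hd (t, x)).hasFDerivAt).comp_hasDerivAt t h1
  show HasDerivAt _ (deriv (fun s => v s x) t) t
  rw [H.deriv]
  exact H

lemma px_eq_fderiv (h : ContDiff ℝ (⊤ : ℕ∞) (Function.uncurry v)) (t x : ℝ) :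
    px v t x = fderiv ℝ (Function.uncurry v) (t, x) (0, 1) := by
  have h1 : HasDerivAt (fun y : ℝ => ((t, y) : ℝ × ℝ)) (0, 1) x :=
    (hasDerivAt_const x t).prodMk (hasDerivAt_id x)
  exact (((h.differentiable (by simp) (t, x)).hasFDerivAt).comp_hasDerivAt x h1).deriv

lemma pt_eq_fderiv (h : ContDiff ℝ (⊤ : ℕ∞) (Function.uncurry v)) (t x : ℝ) :
    pt v t x = fderiv ℝ (Function.uncurry v) (t, x) (1, 0) := by
  have h1 : HasDerivAt (fun s : ℝ => ((s, x) : ℝ × ℝ)) (1, 0) t :=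
    (hasDerivAt_id t).prodMk (hasDerivAt_const t x)
  exact (((h.differentiable (by simp) (t, x)).hasFDerivAt).comp_hasDerivAt t h1).deriv

lemma contDiff_px (h : ContDiff ℝ (⊤ : ℕ∞) (Function.uncurry v)) :
    ContDiff ℝ (⊤ : ℕ∞) (Function.uncurry (px v)) := by
  have heq : Function.uncurry (px v)
      = fun p : ℝ × ℝ => fderiv ℝ (Function.uncurry v) p (0, 1) := by
    funext p
    exact px_eq_fderiv h p.1 p.2
  rw [heq]
  exact (h.fderiv_right (by simp)).clm_apply contDiff_const

lemma contDiff_pt (h : ContDiff ℝ (⊤ : ℕ∞) (Function.uncurry v)) :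
    ContDiff ℝ (⊤ : ℕ∞) (Function.uncurry (pt v)) := by
  have heq : Function.uncurry (pt v)
      = fun p : ℝ × ℝ => fderiv ℝ (Function.uncurry v) p (1, 0) := by
    funext p
    exact pt_eq_fderiv h p.1 p.2
  rw [heq]
  exact (h.fderiv_right (by simp)).clm_apply contDiff_const

lemma pt_px_comm (h : ContDiff ℝ (⊤ : ℕ∞) (Function.uncurry v)) (t x : ℝ) :
    pt (px v) t x = px (pt v) t x := by
  have hsym : ∀ a b : ℝ × ℝ,
      fderiv ℝ (fderiv ℝ (Function.uncurry v)) (t, x) a b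
        = fderiv ℝ (fderiv ℝ (Function.uncurry v)) (t, x) b a := by
    intro a b
    exact ((h.contDiffAt).isSymmSndFDerivAt (by rw [minSmoothness_of_isRCLikeNormedField]; exact WithTop.coe_le_coe.mpr le_top)).eq a b
  have hdiff : DifferentiableAt ℝ (fderiv ℝ (Function.uncurry v)) (t, x) :=
    ((h.fderiv_right (m := (⊤ : ℕ∞)) (by simp)).differentiable (by simp)) (t, x)
  have e1 : ∀ w : ℝ × ℝ,
      fderiv ℝ (fun p : ℝ × ℝ => fderiv ℝ (Function.uncurry v) p (0, 1)) (t, x) w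
        = fderiv ℝ (fderiv ℝ (Function.uncurry v)) (t, x) w (0, 1) := by
    intro w
    rw [fderiv_clm_apply hdiff (differentiableAt_const _)]
    simp
  have e2 : ∀ w : ℝ × ℝ,
      fderiv ℝ (fun p : ℝ × ℝ => fderiv ℝ (Function.uncurry v) p (1, 0)) (t, x) w
        = fderiv ℝ (fderiv ℝ (Function.uncurry v)) (t, x) w (1, 0) := by
    intro w
    rw [fderiv_clm_apply hdiff (differentiableAt_const _)]
    simp
  have hux : Function.uncurry (px v)
      = fun p : ℝ × ℝ => fderiv ℝ (Function.uncurry v) p (0, 1) := by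
    funext p; exact px_eq_fderiv h p.1 p.2
  have hut : Function.uncurry (pt v)
      = fun p : ℝ × ℝ => fderiv ℝ (Function.uncurry v) p (1, 0) := by
    funext p; exact pt_eq_fderiv h p.1 p.2
  calc pt (px v) t x = fderiv ℝ (Function.uncurry (px v)) (t, x) (1, 0) :=
        pt_eq_fderiv (contDiff_px h) t x
    _ = fderiv ℝ (fderiv ℝ (Function.uncurry v)) (t, x) (1, 0) (0, 1) := by
        rw [hux]; exact e1 _
    _ = fderiv ℝ (fderiv ℝ (Function.uncurry v)) (t, x) (0, 1) (1, 0) := hsym _ _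
    _ = fderiv ℝ (Function.uncurry (pt v)) (t, x) (0, 1) := by
        rw [hut]; exact (e2 _).symm
    _ = px (pt v) t x := (px_eq_fderiv (contDiff_pt h) t x).symm

lemma cont_in_x (h : ContDiff ℝ (⊤ : ℕ∞) (Function.uncurry v)) (t : ℝ) :
    Continuous (fun x => v t x) :=
  h.continuous.comp (Continuous.prodMk_right t)

lemma periodic_px (hper : ∀ t, Function.Periodic (v t) (2 * Real.pi)) (t : ℝ) :
    Function.Periodic (px v t) (2 * Real.pi) := by
  intro x
  show deriv (fun y => v t y) (x + 2 * Real.pi) = deriv (fun y => v t y) x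
  have hfun : (fun y : ℝ => v t (y + 2 * Real.pi)) = fun y => v t y := funext (hper t)
  calc deriv (fun y => v t y) (x + 2 * Real.pi)
      = deriv (fun y : ℝ => v t (y + 2 * Real.pi)) x := (deriv_comp_add_const _ _ _).symm
    _ = deriv (fun y => v t y) x := by rw [hfun]

lemma periodic_pt (hper : ∀ t, Function.Periodic (v t) (2 * Real.pi)) (t : ℝ) :
    Function.Periodic (pt v t) (2 * Real.pi) := by
  intro x
  show deriv (fun s => v s (x + 2 * Real.pi)) t = deriv (fun s => v s x) t
  congr 1
  funext s
  exact hper s x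

end calculus

lemma flux_hasDerivAt {u : ℝ → ℝ → ℝ} (h : ContDiff ℝ (⊤ : ℕ∞) (Function.uncurry u)) {t x : ℝ}
    (hpde : pt u t x + px u t x + 6 * u t x * px u t x - 6 * (u t x) ^ 2 * px u t x
      + 12 * (u t x) ^ 3 * px u t x + px (px (px u)) t x - pt (px (px u)) t x
      + 14 * u t x * px (px (px u)) t x + 28 * px u t x * px (px u) t x = 0) :
    HasDerivAt (fun y => 2 * u t y * pt (px u) t y
        - (u t y ^ 2 + 4 * u t y ^ 3 - 3 * u t y ^ 4 + 24/5 * u t y ^ 5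
          + 2 * (u t y * px (px u) t y) - px u t y ^ 2 + 28 * (u t y ^ 2 * px (px u) t y)))
      (2 * u t x * pt u t x + 2 * px u t x * pt (px u) t x) x := by
  have h0 := hasDerivAt_px h t x
  have h1 := hasDerivAt_px (contDiff_px h) t x
  have h2 := hasDerivAt_px (contDiff_px (contDiff_px h)) t x
  have h3 := hasDerivAt_px (contDiff_pt (contDiff_px h)) t x
  rw [← pt_px_comm (contDiff_px h) t x] at h3
  have A := (HasDerivAt.const_mul (2:ℝ) h0).mul h3
  have T1 := h0.pow 2
  have T2 := HasDerivAt.const_mul (4:ℝ) (h0.pow 3)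
  have T3 := HasDerivAt.const_mul (3:ℝ) (h0.pow 4)
  have T4 := HasDerivAt.const_mul (24/5:ℝ) (h0.pow 5)
  have T5 := HasDerivAt.const_mul (2:ℝ) (h0.mul h2)
  have T6 := h1.pow 2
  have T7 := HasDerivAt.const_mul (28:ℝ) ((h0.pow 2).mul h2)
  have H := A.sub (((((T1.add T2).sub T3).add T4).add T5).sub T6 |>.add T7)
  refine H.congr_deriv ?_
  simp only [Pi.pow_apply]
  linear_combination (-2 * u t x) * hpde

lemma space_int_zero {u : ℝ → ℝ → ℝ} (h : ContDiff ℝ (⊤ : ℕ∞) (Function.uncurry u))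
    (hper : ∀ t, Function.Periodic (u t) (2 * Real.pi)) {t : ℝ}
    (hpde : ∀ x : ℝ, pt u t x + px u t x + 6 * u t x * px u t x - 6 * (u t x) ^ 2 * px u t x
      + 12 * (u t x) ^ 3 * px u t x + px (px (px u)) t x - pt (px (px u)) t x
      + 14 * u t x * px (px (px u)) t x + 28 * px u t x * px (px u) t x = 0) :
    ∫ x in (0:ℝ)..(2 * Real.pi),
      (2 * u t x * pt u t x + 2 * px u t x * pt (px u) t x) = 0 := by
  have hint : IntervalIntegrable
      (fun x => 2 * u t x * pt u t x + 2 * px u t x * pt (px u) t x)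
      volume 0 (2 * Real.pi) := by
    apply Continuous.intervalIntegrable
    exact ((continuous_const.mul (cont_in_x h t)).mul (cont_in_x (contDiff_pt h) t)).add
      ((continuous_const.mul (cont_in_x (contDiff_px h) t)).mul
        (cont_in_x (contDiff_pt (contDiff_px h)) t))
  have hFTC := intervalIntegral.integral_eq_sub_of_hasDerivAt
    (a := 0) (b := 2 * Real.pi)
    (f := fun y => 2 * u t y * pt (px u) t y
        - (u t y ^ 2 + 4 * u t y ^ 3 - 3 * u t y ^ 4 + 24/5 * u t y ^ 5
          + 2 * (u t y * px (px u) t y) - px u t y ^ 2 + 28 * (u t y ^ 2 * px (px u) t y)))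
    (fun x _ => flux_hasDerivAt h (hpde x)) hint
  rw [hFTC]
  have e0 : u t (2 * Real.pi) = u t 0 := by simpa using hper t 0
  have e1 : px u t (2 * Real.pi) = px u t 0 := by simpa using periodic_px hper t 0
  have e2 : px (px u) t (2 * Real.pi) = px (px u) t 0 := by
    simpa using periodic_px (fun s => periodic_px hper s) t 0
  have e3 : pt (px u) t (2 * Real.pi) = pt (px u) t 0 := by
    simpa using periodic_pt (fun s => periodic_px hper s) t 0
  rw [e0, e1, e2, e3]
  ring

lemma energy_eq {T : ℝ} {u : ℝ → ℝ → ℝ} (h : ContDiff ℝ (⊤ : ℕ∞) (Function.uncurry u))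
    (hper : ∀ t, Function.Periodic (u t) (2 * Real.pi))
    (hpde : ∀ t ∈ Set.Ico (0:ℝ) T, ∀ x : ℝ,
      pt u t x + px u t x + 6 * u t x * px u t x - 6 * (u t x) ^ 2 * px u t x
      + 12 * (u t x) ^ 3 * px u t x + px (px (px u)) t x - pt (px (px u)) t x
      + 14 * u t x * px (px (px u)) t x + 28 * px u t x * px (px u) t x = 0)
    {t : ℝ} (ht : t ∈ Set.Ico (0:ℝ) T) :
    (∫ x in (0:ℝ)..(2 * Real.pi), (u t x ^ 2 + px u t x ^ 2))
      = ∫ x in (0:ℝ)..(2 * Real.pi), (u 0 x ^ 2 + px u 0 x ^ 2) := by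
  obtain ⟨ht0, htT⟩ := ht
  set dg : ℝ → ℝ → ℝ := fun s x => 2 * u s x * pt u s x + 2 * px u s x * pt (px u) s x
    with hdgdef
  have hderiv : ∀ s x : ℝ, HasDerivAt (fun s' => u s' x ^ 2 + px u s' x ^ 2) (dg s x) s := by
    intro s x
    have H := ((hasDerivAt_pt h s x).pow 2).add ((hasDerivAt_pt (contDiff_px h) s x).pow 2)
    refine H.congr_deriv ?_
    push_cast
    ring
  have jointcont : Continuous (fun p : ℝ × ℝ => dg p.2 p.1) := by
    have cu : Continuous (fun p : ℝ × ℝ => u p.2 p.1) := h.continuous.comp continuous_swap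
    have cut : Continuous (fun p : ℝ × ℝ => pt u p.2 p.1) :=
      (contDiff_pt h).continuous.comp continuous_swap
    have cux : Continuous (fun p : ℝ × ℝ => px u p.2 p.1) :=
      (contDiff_px h).continuous.comp continuous_swap
    have cuxt : Continuous (fun p : ℝ × ℝ => pt (px u) p.2 p.1) :=
      (contDiff_pt (contDiff_px h)).continuous.comp continuous_swap
    exact ((continuous_const.mul cu).mul cut).add ((continuous_const.mul cux).mul cuxt)
  have key1 : ∀ x : ℝ, u t x ^ 2 + px u t x ^ 2 - (u 0 x ^ 2 + px u 0 x ^ 2)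
      = ∫ s in (0:ℝ)..t, dg s x := by
    intro x
    have hc : Continuous (fun s => dg s x) :=
      jointcont.comp (Continuous.prodMk_right x)
    have := intervalIntegral.integral_eq_sub_of_hasDerivAt (a := 0) (b := t)
      (f := fun s' => u s' x ^ 2 + px u s' x ^ 2) (f' := fun s => dg s x)
      (fun s _ => hderiv s x) (hc.intervalIntegrable _ _)
    rw [this]
  have i1 : IntervalIntegrable (fun x => u t x ^ 2 + px u t x ^ 2) volume 0 (2 * Real.pi) :=
    (((cont_in_x h t).pow 2).add ((cont_in_x (contDiff_px h) t).pow 2)).intervalIntegrable _ _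
  have i2 : IntervalIntegrable (fun x => u 0 x ^ 2 + px u 0 x ^ 2) volume 0 (2 * Real.pi) :=
    (((cont_in_x h 0).pow 2).add ((cont_in_x (contDiff_px h) 0).pow 2)).intervalIntegrable _ _
  have hsub : (∫ x in (0:ℝ)..(2 * Real.pi), (u t x ^ 2 + px u t x ^ 2))
      - ∫ x in (0:ℝ)..(2 * Real.pi), (u 0 x ^ 2 + px u 0 x ^ 2)
      = ∫ x in (0:ℝ)..(2 * Real.pi),
          (u t x ^ 2 + px u t x ^ 2 - (u 0 x ^ 2 + px u 0 x ^ 2)) :=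
    (intervalIntegral.integral_sub i1 i2).symm
  have h2 : (∫ x in (0:ℝ)..(2 * Real.pi),
        (u t x ^ 2 + px u t x ^ 2 - (u 0 x ^ 2 + px u 0 x ^ 2)))
      = ∫ x in (0:ℝ)..(2 * Real.pi), (∫ s in (0:ℝ)..t, dg s x) :=
    intervalIntegral.integral_congr (fun x _ => key1 x)
  have hInt : MeasureTheory.Integrable (Function.uncurry fun x s => dg s x)
      ((volume.restrict (Set.Ioc (0:ℝ) (2 * Real.pi))).prod
        (volume.restrict (Set.Ioc (0:ℝ) t))) := by
    rw [MeasureTheory.Measure.prod_restrict]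
    have hIOn : MeasureTheory.IntegrableOn (fun p : ℝ × ℝ => dg p.2 p.1)
        (Set.Icc (0:ℝ) (2 * Real.pi) ×ˢ Set.Icc (0:ℝ) t) (volume.prod volume) :=
      (jointcont.continuousOn).integrableOn_compact (isCompact_Icc.prod isCompact_Icc)
    exact hIOn.mono_set (Set.prod_mono Set.Ioc_subset_Icc_self Set.Ioc_subset_Icc_self)
  have h3 : (∫ x in (0:ℝ)..(2 * Real.pi), (∫ s in (0:ℝ)..t, dg s x))
      = ∫ s in Set.Ioc (0:ℝ) t, (∫ x in Set.Ioc (0:ℝ) (2 * Real.pi), dg s x) := by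
    rw [intervalIntegral.integral_of_le Real.two_pi_pos.le]
    simp_rw [intervalIntegral.integral_of_le ht0]
    exact MeasureTheory.integral_integral_swap hInt
  have h4 : ∀ s ∈ Set.Ioc (0:ℝ) t, (∫ x in Set.Ioc (0:ℝ) (2 * Real.pi), dg s x) = 0 := by
    intro s hs
    have hsIco : s ∈ Set.Ico (0:ℝ) T := ⟨hs.1.le, lt_of_le_of_lt hs.2 htT⟩
    have := space_int_zero h hper (hpde s hsIco)
    rwa [intervalIntegral.integral_of_le Real.two_pi_pos.le] at this
  have h5 : (∫ s in Set.Ioc (0:ℝ) t, (∫ x in Set.Ioc (0:ℝ) (2 * Real.pi), dg s x)) = 0 := by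
    rw [MeasureTheory.setIntegral_congr_fun measurableSet_Ioc h4]
    simp
  have := hsub.trans (h2.trans (h3.trans h5))
  linarith

/-- Conservation of the `H^1` norm for smooth solutions of (CH). -/
theorem statement4 (T : ℝ) (u : ℝ → ℝ → ℝ)
    (hu : IsSolutionCHOn u (Set.Ico 0 T)) :
    ∀ t ∈ Set.Ico (0:ℝ) T,
      sobolevNorm 1 (u t) = sobolevNorm 1 (u 0) ∧
      (∫ x in (0:ℝ)..(2 * Real.pi), ((u t x) ^ 2 + (px u t x) ^ 2)) =
        ∫ x in (0:ℝ)..(2 * Real.pi), ((u 0 x) ^ 2 + (px u 0 x) ^ 2) := by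
  obtain ⟨hs, hper, hpde⟩ := hu
  intro t ht
  have hE := energy_eq hs hper hpde ht
  refine ⟨?_, hE⟩
  have hu_t : ∀ s : ℝ, ContDiff ℝ (⊤ : ℕ∞) (u s) := fun s =>
    hs.comp (contDiff_const.prodMk contDiff_id)
  have hkey : ∀ s : ℝ,
      (∑' k : ℤ, (1 + (k:ℝ) ^ 2) ^ (1:ℝ) * ‖fourierCoef (u s) k‖ ^ 2)
        = ∫ x in (0:ℝ)..(2 * Real.pi), (u s x ^ 2 + px u s x ^ 2) := by
    intro s
    exact sobolev_one_sum (hu_t s) (hper s)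
  rw [sobolevNorm, sobolevNorm, hkey t, hkey 0, hE]
end

section
/- Fix s ∈ ℝ and for ω ∈ {-1,1} and integers n ≥ 1 define u^{ω,n}(t,x) := ( ω n^{-1} - 1 - n^{-s} cos(n x + ω t) ) / 14. Then for all t, x ∈ ℝ one has the pointwise identity ∂_t u^{ω,n}(t,x) - ∂_x u^{ω,n}(t,x) - 14 u^{ω,n}(t,x) ∂_x u^{ω,n}(t,x) = (n^{-2s+1} / 28) sin( 2 (n x + ω t) ). -/
open MeasureTheory Filter

/-- The local part of the error of the approximate solutions:
`u^{ω,n}_t - u^{ω,n}_x - 14 u^{ω,n} u^{ω,n}_x = (n^{-2s+1}/28) sin(2(nx+ωt))`. -/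
theorem statement7 (s : ℝ) (ω : ℝ) (hω : ω ∈ ({-1, 1} : Set ℝ)) (n : ℕ) (hn : 1 ≤ n) :
    ∀ t x : ℝ,
      pt (uapprox s ω n) t x - px (uapprox s ω n) t x
          - 14 * uapprox s ω n t x * px (uapprox s ω n) t x =
        (n : ℝ) ^ (-2 * s + 1) / 28 * Real.sin (2 * (n * x + ω * t)) := by
  intro t x
  have hθt : HasDerivAt (fun τ : ℝ => (n : ℝ) * x + ω * τ) ω t := by
    simpa using ((hasDerivAt_id t).const_mul ω).const_add ((n : ℝ) * x)
  have hθx : HasDerivAt (fun y : ℝ => (n : ℝ) * y + ω * t) (n : ℝ) x := by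
    simpa using (((hasDerivAt_id x).const_mul (n : ℝ)).add_const (ω * t))
  have hpt : pt (uapprox s ω n) t x
      = (n : ℝ) ^ (-s) * (Real.sin ((n : ℝ) * x + ω * t) * ω) / 14 := by
    have h : HasDerivAt (fun τ => uapprox s ω n τ x)
        ((0 - (n : ℝ) ^ (-s) * (-Real.sin ((n : ℝ) * x + ω * t) * ω)) / 14) t := by
      have hc := (Real.hasDerivAt_cos ((n : ℝ) * x + ω * t)).comp t hθt
      exact (((hasDerivAt_const t (ω * (n : ℝ)⁻¹ - 1)).sub (hc.const_mul ((n : ℝ) ^ (-s)))).div_const 14)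
    have := h.deriv
    simp only [pt]
    rw [this]; ring
  have hpx : px (uapprox s ω n) t x
      = (n : ℝ) ^ (-s) * (Real.sin ((n : ℝ) * x + ω * t) * (n : ℝ)) / 14 := by
    have h : HasDerivAt (fun y => uapprox s ω n t y)
        ((0 - (n : ℝ) ^ (-s) * (-Real.sin ((n : ℝ) * x + ω * t) * (n : ℝ))) / 14) x := by
      have hc := (Real.hasDerivAt_cos ((n : ℝ) * x + ω * t)).comp x hθx
      exact (((hasDerivAt_const x (ω * (n : ℝ)⁻¹ - 1)).sub (hc.const_mul ((n : ℝ) ^ (-s)))).div_const 14)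
    have := h.deriv
    simp only [px]
    rw [this]; ring
  have hn0 : (0 : ℝ) < (n : ℝ) := by exact_mod_cast hn
  have hω2 : ω * ω = 1 := by
    simp only [Set.mem_insert_iff, Set.mem_singleton_iff] at hω
    rcases hω with h | h <;> subst h <;> norm_num
  have hpow : (n : ℝ) ^ (-2 * s + 1) = (n : ℝ) ^ (-s) * (n : ℝ) ^ (-s) * (n : ℝ) := by
    rw [show -2 * s + 1 = -s + (-s + 1) by ring, Real.rpow_add hn0, Real.rpow_add hn0,
      Real.rpow_one]
    ring
  rw [hpt, hpx, hpow, Real.sin_two_mul, uapprox]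
  have hinv : (n : ℝ)⁻¹ * (n : ℝ) = 1 := inv_mul_cancel₀ hn0.ne'
  field_simp
  nlinarith [hω2, hinv, sq_nonneg ((n:ℝ) ^ (-s)), Real.sin_sq_add_cos_sq ((n:ℝ)*x + ω*t)]
end

section
/- Fix s > 3/2 and for ω ∈ {-1,1} and integers n ≥ 1 define u^{ω,n}(t,x) := ( ω n^{-1} - 1 - n^{-s} cos(n x + ω t) ) / 14, and set E₂(t,·) := Λ^{-2} ( 14 u^{ω,n}_x u^{ω,n}_{xx} - 12 (u^{ω,n})³ u^{ω,n}_x + 6 (u^{ω,n})² u^{ω,n}_x - 20 u^{ω,n} u^{ω,n}_x - 2 u^{ω,n}_x )(t,·). Then for every σ with 1/2 < σ ≤ 1 there exists a constant C > 0 (depending only on s and σ) such that ‖E₂(t,·)‖_{H^σ} ≤ C ( n^{-2s+1+σ} + n^{-s-1+σ} ) for all t ∈ ℝ, all ω ∈ {-1,1}, and all integers n ≥ 1. -/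
open MeasureTheory Filter

set_option maxHeartbeats 2000000

section aux

lemma key_int (m : ℤ) :
    (∫ x in (0:ℝ)..(2*Real.pi), Complex.exp (Complex.I * (m:ℂ) * (x:ℝ))) =
      if m = 0 then (((2*Real.pi : ℝ)) : ℂ) else 0 := by
  rcases eq_or_ne m 0 with h | h
  · subst h
    simp
  · rw [if_neg h]
    have hc : (Complex.I * (m:ℂ)) ≠ 0 := by
      simp [Complex.I_ne_zero, h]
    have heq : (fun x : ℝ => Complex.exp (Complex.I * (m:ℂ) * (x:ℝ)))
        = fun x : ℝ => Complex.exp ((Complex.I * (m:ℂ)) * (x:ℝ)) := by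
      funext x; ring_nf
    calc (∫ x in (0:ℝ)..(2*Real.pi), Complex.exp (Complex.I * (m:ℂ) * (x:ℝ)))
        = ∫ x in (0:ℝ)..(2*Real.pi), Complex.exp ((Complex.I * (m:ℂ)) * (x:ℝ)) := by rw [heq]
      _ = (Complex.exp (Complex.I * (m:ℂ) * (2*Real.pi:ℝ)) - Complex.exp (Complex.I * (m:ℂ) * (0:ℝ))) / (Complex.I * (m:ℂ)) := by
          rw [integral_exp_mul_complex hc]
      _ = 0 := by
          have h2 : Complex.exp (Complex.I * (m:ℂ) * ((2*Real.pi:ℝ):ℂ)) = 1 := by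
            rw [show Complex.I * (m:ℂ) * ((2*Real.pi:ℝ):ℂ) = (m:ℂ) * (2 * (Real.pi:ℂ) * Complex.I) by push_cast; ring]
            exact Complex.exp_int_mul_two_pi_mul_I m
          rw [h2]
          norm_num

lemma fourierCoef_expsum (g : ℝ → ℝ) (J : Finset ℤ) (ν : ℤ) (d : ℤ → ℂ)
    (H : ∀ x : ℝ, (g x : ℂ) = ∑ j ∈ J, d j * Complex.exp (Complex.I * ((j*ν : ℤ):ℂ) * (x:ℝ)))
    (k : ℤ) :
    fourierCoef g k =
      (((2*Real.pi) ^ (-(1:ℝ)/2) : ℝ) : ℂ) *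
        ∑ j ∈ J, (if k = j*ν then (((2*Real.pi:ℝ)) : ℂ) * d j else 0) := by
  unfold fourierCoef
  congr 1
  have hEq : Set.EqOn (fun x : ℝ => (g x : ℂ) * Complex.exp (-Complex.I * k * x))
      (fun x : ℝ => ∑ j ∈ J, d j * Complex.exp (Complex.I * ((j*ν - k : ℤ):ℂ) * (x:ℝ)))
      (Set.uIcc (0:ℝ) (2*Real.pi)) := by
    intro x _
    simp only
    rw [H x, Finset.sum_mul]
    refine Finset.sum_congr rfl fun j _ => ?_
    rw [mul_assoc, ← Complex.exp_add]
    congr 2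
    push_cast
    ring
  rw [intervalIntegral.integral_congr hEq]
  rw [intervalIntegral.integral_finset_sum (fun j _ => (by fun_prop :
      Continuous fun x : ℝ => d j * Complex.exp (Complex.I * ((j*ν - k : ℤ):ℂ) * (x:ℝ))).intervalIntegrable _ _)]
  refine Finset.sum_congr rfl fun j hj => ?_
  rw [intervalIntegral.integral_const_mul, key_int]
  rcases eq_or_ne k (j*ν) with hk | hk
  · rw [if_pos (by omega : j*ν - k = 0), if_pos hk]; ring
  · rw [if_neg (by omega : ¬ (j*ν - k = 0)), if_neg hk]; ring

lemma fourierCoef_expsum_eval (g : ℝ → ℝ) (J : Finset ℤ) (ν : ℤ) (d : ℤ → ℂ)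
    (H : ∀ x : ℝ, (g x : ℂ) = ∑ j ∈ J, d j * Complex.exp (Complex.I * ((j*ν : ℤ):ℂ) * (x:ℝ)))
    (hν : ν ≠ 0) (j₀ : ℤ) (hj₀ : j₀ ∈ J) :
    fourierCoef g (j₀*ν) =
      (((2*Real.pi) ^ (-(1:ℝ)/2) : ℝ) : ℂ) * ((((2*Real.pi:ℝ)) : ℂ) * d j₀) := by
  rw [fourierCoef_expsum g J ν d H]
  congr 1
  rw [Finset.sum_eq_single_of_mem j₀ hj₀]
  · rw [if_pos rfl]
  · intro b _ hbne
    rw [if_neg]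
    intro hc
    exact hbne (mul_right_cancel₀ hν hc).symm

lemma fourierCoef_expsum_zero (g : ℝ → ℝ) (J : Finset ℤ) (ν : ℤ) (d : ℤ → ℂ)
    (H : ∀ x : ℝ, (g x : ℂ) = ∑ j ∈ J, d j * Complex.exp (Complex.I * ((j*ν : ℤ):ℂ) * (x:ℝ)))
    (k : ℤ) (hk : k ∉ J.image (fun j => j * ν)) :
    fourierCoef g k = 0 := by
  rw [fourierCoef_expsum g J ν d H]
  have : ∀ j ∈ J, (if k = j*ν then (((2*Real.pi:ℝ)) : ℂ) * d j else 0) = 0 := by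
    intro j hj
    rw [if_neg]
    intro hc
    exact hk (Finset.mem_image.2 ⟨j, hj, hc.symm⟩)
  rw [Finset.sum_congr rfl this]
  simp


lemma kappa_sq : ((2*Real.pi) ^ (-(1:ℝ)/2) : ℝ) * ((2*Real.pi) ^ (-(1:ℝ)/2) : ℝ) * (2*Real.pi) = 1 := by
  have h2π : (0:ℝ) < 2*Real.pi := by positivity
  have h1 : ((2*Real.pi) ^ (-(1:ℝ)/2) : ℝ) * ((2*Real.pi) ^ (-(1:ℝ)/2) : ℝ)
      = (2*Real.pi) ^ (-1:ℝ) := by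
    rw [← Real.rpow_add h2π]; norm_num
  rw [h1, Real.rpow_neg_one]
  exact inv_mul_cancel₀ (ne_of_gt h2π)

lemma kappa_sq_c : (((2*Real.pi) ^ (-(1:ℝ)/2) : ℝ) : ℂ) * (((2*Real.pi) ^ (-(1:ℝ)/2) : ℝ) : ℂ) * (((2*Real.pi : ℝ)) : ℂ) = 1 := by
  rw [← Complex.ofReal_mul, ← Complex.ofReal_mul, kappa_sq, Complex.ofReal_one]

lemma lam_expsum (g : ℝ → ℝ) (J : Finset ℤ) (ν : ℤ) (d : ℤ → ℂ)
    (H : ∀ x : ℝ, (g x : ℂ) = ∑ j ∈ J, d j * Complex.exp (Complex.I * ((j*ν : ℤ):ℂ) * (x:ℝ)))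
    (hν : ν ≠ 0) (r : ℝ) (x : ℝ) :
    lam r g x = (∑ j ∈ J, (((1 + ((j*ν:ℤ):ℝ)^2) ^ (r/2) : ℝ) : ℂ) * d j *
      Complex.exp (Complex.I * ((j*ν:ℤ):ℂ) * (x:ℝ))).re := by
  unfold lam
  rw [tsum_eq_sum (s := J.image (fun j => j * ν)) (fun k hk => by
    rw [fourierCoef_expsum_zero g J ν d H k hk]; ring)]
  rw [Finset.sum_image (fun a _ b _ hab => mul_right_cancel₀ hν hab)]
  rw [Finset.mul_sum]
  congr 1
  refine Finset.sum_congr rfl fun j hj => ?_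
  rw [fourierCoef_expsum_eval g J ν d H hν j hj]
  linear_combination (((1 + ((j*ν:ℤ):ℝ)^2) ^ (r/2) : ℝ) : ℂ) * d j *
    Complex.exp (Complex.I * ((j*ν:ℤ):ℂ) * (x:ℝ)) * kappa_sq_c

lemma sobolev_expsum (g : ℝ → ℝ) (J : Finset ℤ) (ν : ℤ) (d : ℤ → ℂ)
    (H : ∀ x : ℝ, (g x : ℂ) = ∑ j ∈ J, d j * Complex.exp (Complex.I * ((j*ν : ℤ):ℂ) * (x:ℝ)))
    (hν : ν ≠ 0) (σ : ℝ) :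
    sobolevNorm σ g = Real.sqrt (∑ j ∈ J,
      (1 + ((j*ν:ℤ):ℝ)^2) ^ σ * (2*Real.pi) * ‖d j‖ ^ 2) := by
  unfold sobolevNorm
  congr 1
  rw [tsum_eq_sum (s := J.image (fun j => j * ν)) (fun k hk => by
    rw [fourierCoef_expsum_zero g J ν d H k hk]; simp)]
  rw [Finset.sum_image (fun a _ b _ hab => mul_right_cancel₀ hν hab)]
  refine Finset.sum_congr rfl fun j hj => ?_
  rw [fourierCoef_expsum_eval g J ν d H hν j hj]
  rw [norm_mul, norm_mul, Complex.norm_real, Complex.norm_real, Real.norm_eq_abs, Real.norm_eq_abs]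
  have hκpos : (0:ℝ) ≤ (2*Real.pi) ^ (-(1:ℝ)/2) := Real.rpow_nonneg (by positivity) _
  have h2π : (0:ℝ) ≤ 2*Real.pi := by positivity
  rw [abs_of_nonneg hκpos, abs_of_nonneg h2π]
  linear_combination ((1 + ((j*ν:ℤ):ℝ)^2) ^ σ * ‖d j‖^2 * (2*Real.pi)) * kappa_sq

def Jset : Finset ℤ := {1, 2, 3, 4, -1, -2, -3, -4}

noncomputable def dcoef (B₁ B₂ B₃ B₄ : ℝ) (j : ℤ) : ℂ :=
  if j = 1 then -Complex.I * B₁ / 2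
  else if j = 2 then -Complex.I * B₂ / 2
  else if j = 3 then -Complex.I * B₃ / 2
  else if j = 4 then -Complex.I * B₄ / 2
  else if j = -1 then Complex.I * B₁ / 2
  else if j = -2 then Complex.I * B₂ / 2
  else if j = -3 then Complex.I * B₃ / 2
  else if j = -4 then Complex.I * B₄ / 2
  else 0

noncomputable def dtrig (B₁ B₂ B₃ B₄ φ : ℝ) (j : ℤ) : ℂ :=
  dcoef B₁ B₂ B₃ B₄ j * Complex.exp (Complex.I * (j:ℂ) * (φ:ℝ))

noncomputable def trig4 (B₁ B₂ B₃ B₄ : ℝ) (ν : ℤ) (φ : ℝ) : ℝ → ℝ := fun x =>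
  B₁ * Real.sin (1*((ν:ℝ)*x + φ)) + B₂ * Real.sin (2*((ν:ℝ)*x + φ)) +
  B₃ * Real.sin (3*((ν:ℝ)*x + φ)) + B₄ * Real.sin (4*((ν:ℝ)*x + φ))

lemma Jset_sum {M : Type*} [AddCommMonoid M] (f : ℤ → M) :
    ∑ j ∈ Jset, f j = f 1 + f 2 + f 3 + f 4 + f (-1) + f (-2) + f (-3) + f (-4) := by
  rw [show Jset = {1, 2, 3, 4, -1, -2, -3, -4} from rfl]
  rw [Finset.sum_insert (by decide), Finset.sum_insert (by decide),
      Finset.sum_insert (by decide), Finset.sum_insert (by decide),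
      Finset.sum_insert (by decide), Finset.sum_insert (by decide),
      Finset.sum_insert (by decide), Finset.sum_singleton]
  ring_nf
  abel

lemma trig4_expsum (B₁ B₂ B₃ B₄ : ℝ) (ν : ℤ) (φ : ℝ) : ∀ x : ℝ,
    ((trig4 B₁ B₂ B₃ B₄ ν φ x : ℝ) : ℂ) =
      ∑ j ∈ Jset, dtrig B₁ B₂ B₃ B₄ φ j * Complex.exp (Complex.I * ((j*ν:ℤ):ℂ) * (x:ℝ)) := by
  intro x
  have hz : ∀ j : ℤ, dtrig B₁ B₂ B₃ B₄ φ j * Complex.exp (Complex.I * ((j*ν:ℤ):ℂ) * (x:ℝ))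
      = dcoef B₁ B₂ B₃ B₄ j * Complex.exp (Complex.I * (((ν:ℝ)*x + φ : ℝ):ℂ)) ^ j := by
    intro j
    rw [dtrig, mul_assoc, ← Complex.exp_add,
      show Complex.I * (j:ℂ) * ((φ:ℝ):ℂ) + Complex.I * ((j*ν:ℤ):ℂ) * ((x:ℝ):ℂ)
        = (j:ℂ) * (Complex.I * (((ν:ℝ)*x + φ : ℝ):ℂ)) by push_cast; ring,
      Complex.exp_int_mul]
  rw [Finset.sum_congr rfl (fun j _ => hz j), Jset_sum]
  have hS : ∀ m : ℤ, ((Real.sin ((m:ℝ)*((ν:ℝ)*x + φ)) : ℝ) : ℂ)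
      = (Complex.exp (Complex.I * (((ν:ℝ)*x + φ : ℝ):ℂ)) ^ (-m)
        - Complex.exp (Complex.I * (((ν:ℝ)*x + φ : ℝ):ℂ)) ^ m) * Complex.I / 2 := by
    intro m
    rw [Complex.ofReal_sin]
    rw [show Complex.sin (((m:ℝ)*((ν:ℝ)*x + φ) : ℝ):ℂ)
        = (Complex.exp (-(((m:ℝ)*((ν:ℝ)*x + φ) : ℝ):ℂ) * Complex.I)
          - Complex.exp ((((m:ℝ)*((ν:ℝ)*x + φ) : ℝ):ℂ) * Complex.I)) * Complex.I / 2 from rfl]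
    rw [show (-(((m:ℝ)*((ν:ℝ)*x + φ) : ℝ):ℂ) * Complex.I)
        = ((-m : ℤ):ℂ) * (Complex.I * (((ν:ℝ)*x + φ : ℝ):ℂ)) by push_cast; ring,
      show ((((m:ℝ)*((ν:ℝ)*x + φ) : ℝ):ℂ) * Complex.I)
        = ((m : ℤ):ℂ) * (Complex.I * (((ν:ℝ)*x + φ : ℝ):ℂ)) by push_cast; ring,
      Complex.exp_int_mul, Complex.exp_int_mul]
  have h1 := hS 1
  have h2 := hS 2
  have h3 := hS 3
  have h4 := hS 4
  norm_num at h1 h2 h3 h4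
  rw [trig4]
  push_cast [one_mul, h1, h2, h3, h4]
  norm_num [dcoef]
  ring

lemma lam_trig4 (B₁ B₂ B₃ B₄ : ℝ) (ν : ℤ) (hν : ν ≠ 0) (φ r : ℝ) :
    lam r (trig4 B₁ B₂ B₃ B₄ ν φ) = trig4
      ((1+((1*ν:ℤ):ℝ)^2)^(r/2) * B₁) ((1+((2*ν:ℤ):ℝ)^2)^(r/2) * B₂)
      ((1+((3*ν:ℤ):ℝ)^2)^(r/2) * B₃) ((1+((4*ν:ℤ):ℝ)^2)^(r/2) * B₄) ν φ := by
  funext x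
  rw [lam_expsum _ Jset ν _ (trig4_expsum B₁ B₂ B₃ B₄ ν φ) hν r x]
  have key : ∑ j ∈ Jset, (((1 + ((j*ν:ℤ):ℝ)^2)^(r/2) : ℝ):ℂ) * dtrig B₁ B₂ B₃ B₄ φ j *
        Complex.exp (Complex.I * ((j*ν:ℤ):ℂ) * (x:ℝ))
      = ∑ j ∈ Jset, dtrig ((1+((1*ν:ℤ):ℝ)^2)^(r/2) * B₁) ((1+((2*ν:ℤ):ℝ)^2)^(r/2) * B₂)
          ((1+((3*ν:ℤ):ℝ)^2)^(r/2) * B₃) ((1+((4*ν:ℤ):ℝ)^2)^(r/2) * B₄) φ j *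
        Complex.exp (Complex.I * ((j*ν:ℤ):ℂ) * (x:ℝ)) := by
    refine Finset.sum_congr rfl fun j hj => ?_
    fin_cases hj <;> simp only [dtrig, dcoef] <;> norm_num <;> push_cast <;> ring_nf
  rw [key, ← trig4_expsum, Complex.ofReal_re]

lemma sobolev_trig4 (B₁ B₂ B₃ B₄ : ℝ) (ν : ℤ) (hν : ν ≠ 0) (φ σ : ℝ) :
    sobolevNorm σ (trig4 B₁ B₂ B₃ B₄ ν φ) = Real.sqrt (
      (1+((1*ν:ℤ):ℝ)^2)^σ * Real.pi * B₁^2 + (1+((2*ν:ℤ):ℝ)^2)^σ * Real.pi * B₂^2 +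
      (1+((3*ν:ℤ):ℝ)^2)^σ * Real.pi * B₃^2 + (1+((4*ν:ℤ):ℝ)^2)^σ * Real.pi * B₄^2) := by
  rw [sobolev_expsum _ Jset ν _ (trig4_expsum B₁ B₂ B₃ B₄ ν φ) hν σ]
  congr 1
  rw [Jset_sum]
  have habs : ∀ (j : ℤ) (co : ℂ),
      ‖co * Complex.exp (Complex.I * (j:ℂ) * ((φ:ℝ):ℂ))‖ = ‖co‖ := by
    intro j co
    rw [norm_mul, Complex.norm_exp, show (Complex.I * (j:ℂ) * ((φ:ℝ):ℂ)).re = 0 by simp,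
      Real.exp_zero, mul_one]
  simp only [dtrig, habs]
  norm_num [dcoef]
  simp only [div_pow, sq_abs]
  ring

lemma final_bound (σ : ℝ) (hσ₂ : σ ≤ 1) (n : ℕ) (hn : 1 ≤ n) (M B₁ B₂ B₃ B₄ : ℝ) (hM : 0 ≤ M)
    (h1 : B₁^2 ≤ M^2) (h2 : B₂^2 ≤ M^2) (h3 : B₃^2 ≤ M^2) (h4 : B₄^2 ≤ M^2) :
    Real.sqrt (
      (1+((1*(n:ℤ):ℤ):ℝ)^2)^σ * Real.pi * ((1+((1*(n:ℤ):ℤ):ℝ)^2)^((-2:ℝ)/2) * B₁)^2 +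
      (1+((2*(n:ℤ):ℤ):ℝ)^2)^σ * Real.pi * ((1+((2*(n:ℤ):ℤ):ℝ)^2)^((-2:ℝ)/2) * B₂)^2 +
      (1+((3*(n:ℤ):ℤ):ℝ)^2)^σ * Real.pi * ((1+((3*(n:ℤ):ℤ):ℝ)^2)^((-2:ℝ)/2) * B₃)^2 +
      (1+((4*(n:ℤ):ℤ):ℝ)^2)^σ * Real.pi * ((1+((4*(n:ℤ):ℤ):ℝ)^2)^((-2:ℝ)/2) * B₄)^2)
    ≤ 4 * ((n:ℝ)^(σ-(2:ℝ)) * M) := by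
  have hp1 : (1:ℝ) ≤ (n:ℝ) := by exact_mod_cast hn
  have hp0 : (0:ℝ) < (n:ℝ) := by linarith
  rw [show ((1*(n:ℤ):ℤ):ℝ) = 1*(n:ℝ) by push_cast; ring,
      show ((2*(n:ℤ):ℤ):ℝ) = 2*(n:ℝ) by push_cast; ring,
      show ((3*(n:ℤ):ℤ):ℝ) = 3*(n:ℝ) by push_cast; ring,
      show ((4*(n:ℤ):ℤ):ℝ) = 4*(n:ℝ) by push_cast; ring]
  have key : ∀ k B : ℝ, 1 ≤ k → B^2 ≤ M^2 →
      (1+(k*(n:ℝ))^2)^σ * Real.pi * ((1+(k*(n:ℝ))^2)^((-2:ℝ)/2) * B)^2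
        ≤ 4 * ((n:ℝ)^(σ-(2:ℝ)))^2 * M^2 := by
    intro k B hk hB
    have hX : (0:ℝ) < 1+(k*(n:ℝ))^2 := by positivity
    have e1 : (1+(k*(n:ℝ))^2)^((-2:ℝ)/2) = (1+(k*(n:ℝ))^2)⁻¹ := by
      rw [show ((-2:ℝ)/2) = (-1:ℝ) by norm_num, Real.rpow_neg_one]
    have e2 : (1+(k*(n:ℝ))^2)^σ * ((1+(k*(n:ℝ))^2)⁻¹)^2 = (1+(k*(n:ℝ))^2)^(σ-(2:ℝ)) := by
      rw [inv_pow, ← Real.rpow_two (1+(k*(n:ℝ))^2), ← Real.rpow_neg hX.le, ← Real.rpow_add hX, show σ + -2 = σ - 2 from by ring]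
    have e3 : (1+(k*(n:ℝ))^2)^(σ-(2:ℝ)) ≤ ((n:ℝ)^(σ-(2:ℝ)))^2 := by
      have hb : ((n:ℝ)^2) ≤ 1+(k*(n:ℝ))^2 := by
        nlinarith [mul_nonneg (by nlinarith : (0:ℝ) ≤ k^2 - 1) (sq_nonneg ((n:ℝ)))]
      have h2' := Real.rpow_le_rpow_of_nonpos (by positivity) hb
        (by linarith : σ-(2:ℝ) ≤ 0)
      calc (1+(k*(n:ℝ))^2)^(σ-(2:ℝ)) ≤ ((n:ℝ)^2)^(σ-(2:ℝ)) := h2'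
        _ = ((n:ℝ)^(σ-(2:ℝ)))^2 := by
            rw [← Real.rpow_two (n:ℝ), ← Real.rpow_mul hp0.le,
              ← Real.rpow_two ((n:ℝ)^(σ-(2:ℝ))), ← Real.rpow_mul hp0.le]
            congr 1
            ring
    calc (1+(k*(n:ℝ))^2)^σ * Real.pi * ((1+(k*(n:ℝ))^2)^((-2:ℝ)/2) * B)^2
        = Real.pi * B^2 * ((1+(k*(n:ℝ))^2)^σ * ((1+(k*(n:ℝ))^2)⁻¹)^2) := by rw [e1]; ring
      _ = Real.pi * B^2 * (1+(k*(n:ℝ))^2)^(σ-(2:ℝ)) := by rw [e2]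
      _ ≤ 4 * ((n:ℝ)^(σ-(2:ℝ)))^2 * M^2 := by
          have hπ := Real.pi_le_four
          have hπ0 := Real.pi_pos
          have hXp : (0:ℝ) ≤ (1+(k*(n:ℝ))^2)^(σ-(2:ℝ)) := Real.rpow_nonneg (by positivity) _
          nlinarith [mul_le_mul hB e3 hXp (sq_nonneg M), sq_nonneg B,
            mul_nonneg (sq_nonneg B) hXp]
  have t1 := key 1 B₁ (by norm_num) h1
  have t2 := key 2 B₂ (by norm_num) h2
  have t3 := key 3 B₃ (by norm_num) h3
  have t4 := key 4 B₄ (by norm_num) h4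
  have hE0 : (0:ℝ) ≤ (n:ℝ)^(σ-(2:ℝ)) := Real.rpow_nonneg hp0.le _
  calc Real.sqrt _ ≤ Real.sqrt ((4 * ((n:ℝ)^(σ-(2:ℝ)) * M))^2) := by
        apply Real.sqrt_le_sqrt
        nlinarith [t1, t2, t3, t4]
    _ = 4 * ((n:ℝ)^(σ-(2:ℝ)) * M) := Real.sqrt_sq (by positivity)



lemma uapprox_deriv1 (s ω : ℝ) (n : ℕ) (t : ℝ) :
    (deriv fun y => uapprox s ω n t y) =
      fun x => (n:ℝ)^(-s)*(n:ℝ)*Real.sin ((n:ℝ)*x + ω*t)/14 := by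
  funext x
  have h0 : HasDerivAt (fun y : ℝ => (n:ℝ)*y + ω*t) (n:ℝ) x := by
    simpa using ((hasDerivAt_id x).const_mul (n:ℝ)).add_const (ω*t)
  have h2 := ((h0.cos.const_mul ((n:ℝ)^(-s))).const_sub (ω*((n:ℝ))⁻¹ - 1)).div_const 14
  have h3 : HasDerivAt (fun y => uapprox s ω n t y)
      (-((n:ℝ)^(-s) * (-Real.sin ((n:ℝ)*x+ω*t)*(n:ℝ)))/14) x := by
    simp only [uapprox]
    exact h2
  rw [h3.deriv]
  ring

lemma uapprox_deriv2 (s ω : ℝ) (n : ℕ) (t : ℝ) :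
    (deriv (deriv fun y => uapprox s ω n t y)) =
      fun x => (n:ℝ)^(-s)*(n:ℝ)*((n:ℝ)*Real.cos ((n:ℝ)*x + ω*t))/14 := by
  rw [uapprox_deriv1]
  funext x
  have h0 : HasDerivAt (fun y : ℝ => (n:ℝ)*y + ω*t) (n:ℝ) x := by
    simpa using ((hasDerivAt_id x).const_mul (n:ℝ)).add_const (ω*t)
  have h2 := (h0.sin.const_mul ((n:ℝ)^(-s)*(n:ℝ))).div_const 14
  rw [h2.deriv]
  ring

lemma sin3aux (θ : ℝ) : Real.sin (3*θ) = 4*Real.sin θ*(Real.cos θ)^2 - Real.sin θ := by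
  have h := Real.sin_sq_add_cos_sq θ
  have h3 := Real.sin_three_mul θ
  linear_combination h3 - (4*Real.sin θ)*h

lemma sin4aux (θ : ℝ) : Real.sin (4*θ) = 8*Real.sin θ*(Real.cos θ)^3 - 4*Real.sin θ*Real.cos θ := by
  rw [show (4:ℝ)*θ = 2*(2*θ) by ring, Real.sin_two_mul, Real.sin_two_mul, Real.cos_two_mul]
  ring

lemma expM (sr σ : ℝ) (n : ℕ) (hp0 : (0:ℝ) < (n:ℝ)) :
    (n:ℝ)^(σ-(2:ℝ)) * (((n:ℝ)^(-sr))^2*((n:ℝ))^3 + ((n:ℝ)^(-sr))*((n:ℝ)))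
      = (n:ℝ)^(-2*sr+1+σ) + (n:ℝ)^(-sr-1+σ) := by
  rw [mul_add]
  congr 1
  · rw [show ((n:ℝ)^(-sr))^2*((n:ℝ))^3
        = (n:ℝ)^(-sr)*((n:ℝ)^(-sr)*(n:ℝ)^((3:ℕ):ℝ)) by rw [Real.rpow_natCast]; ring,
      ← Real.rpow_add hp0, ← Real.rpow_add hp0, ← Real.rpow_add hp0]
    congr 1
    push_cast
    ring
  · rw [show ((n:ℝ)^(-sr))*((n:ℝ)) = (n:ℝ)^(-sr)*(n:ℝ)^(1:ℝ) by rw [Real.rpow_one],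
      ← Real.rpow_add hp0, ← Real.rpow_add hp0]
    congr 1
    ring

lemma Bbounds (a c p : ℝ) (ha1 : -2 ≤ a) (ha2 : a ≤ 0) (hc0 : 0 < c) (hc1 : c ≤ 1)
    (hp1 : 1 ≤ p) :
    (c*p*(-24*a^3+168*a^2-7840*a-10976+42*c^2-18*a*c^2)/76832)^2 ≤ (c^2*p^3 + c*p)^2 ∧
    ((c^2*p^3/28 + c^2*p*(36*a^2-168*a+3920+6*c^2)/76832))^2 ≤ (c^2*p^3 + c*p)^2 ∧
    (c^3*p*(42-18*a)/76832)^2 ≤ (c^2*p^3 + c*p)^2 ∧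
    (3*c^4*p/76832)^2 ≤ (c^2*p^3 + c*p)^2 := by
  have hp0 : (0:ℝ) < p := by linarith
  have hcp : 0 < c*p := mul_pos hc0 hp0
  have hc2 : c^2 ≤ 1 := by nlinarith
  have hc2' : c^2 ≤ c := by nlinarith
  have hc3 : c^3 ≤ c := by nlinarith
  have hc4 : c^4 ≤ c := by nlinarith
  have hA2 : a^2 ≤ 4 := by nlinarith
  have hA3 : -(a^3) ≤ 8 := by nlinarith [mul_nonneg (by linarith : (0:ℝ) ≤ a+2) (sq_nonneg a)]
  have hcube : (0:ℝ) ≤ c^2*p^3 := by positivity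
  refine ⟨?_, ?_, ?_, ?_⟩
  · have hQu : (-24*a^3+168*a^2-7840*a-10976+42*c^2-18*a*c^2) ≤ 76832 := by
      nlinarith [mul_nonneg (by linarith : (0:ℝ) ≤ a+2) (by nlinarith : (0:ℝ) ≤ 1 - c^2),
        mul_nonneg (by linarith : (0:ℝ) ≤ -a) (sq_nonneg c)]
    have hQl : -76832 ≤ (-24*a^3+168*a^2-7840*a-10976+42*c^2-18*a*c^2) := by
      nlinarith [mul_nonneg (by linarith : (0:ℝ) ≤ -a) (sq_nonneg c),
        mul_nonneg (by linarith : (0:ℝ) ≤ -a) (sq_nonneg a), sq_nonneg c]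
    have h1 := mul_le_mul_of_nonneg_left hQu hcp.le
    have h2 := mul_le_mul_of_nonneg_left hQl hcp.le
    apply sq_le_sq'
    · linarith
    · linarith
  · have hQ2u : (36*a^2-168*a+3920+6*c^2) ≤ 76832 := by nlinarith
    have hQ2l : (0:ℝ) ≤ (36*a^2-168*a+3920+6*c^2) := by nlinarith
    have s1 : c^2*p*(36*a^2-168*a+3920+6*c^2) ≤ c*p*(36*a^2-168*a+3920+6*c^2) := by
      nlinarith [mul_nonneg (by nlinarith : (0:ℝ) ≤ c - c^2) (mul_nonneg hp0.le hQ2l)]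
    have s2 : c*p*(36*a^2-168*a+3920+6*c^2) ≤ c*p*76832 :=
      mul_le_mul_of_nonneg_left hQ2u hcp.le
    have hBpos : (0:ℝ) ≤ c^2*p^3/28 + c^2*p*(36*a^2-168*a+3920+6*c^2)/76832 := by
      nlinarith [mul_nonneg (mul_nonneg (sq_nonneg c) hp0.le) hQ2l, hcube]
    apply sq_le_sq'
    · linarith [hcp.le]
    · linarith
  · have q3a : (0:ℝ) ≤ 42-18*a := by linarith
    have s1 : c^3*p*(42-18*a) ≤ c*p*(42-18*a) := by
      nlinarith [mul_nonneg (by nlinarith : (0:ℝ) ≤ c - c^3) (mul_nonneg hp0.le q3a)]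
    have s2 : c*p*(42-18*a) ≤ c*p*76832 := mul_le_mul_of_nonneg_left (by linarith) hcp.le
    have hpos : (0:ℝ) ≤ c^3*p*(42-18*a) :=
      mul_nonneg (mul_nonneg (pow_nonneg hc0.le 3) hp0.le) q3a
    apply sq_le_sq'
    · linarith [hcp.le]
    · linarith
  · have s1 : c^4*p ≤ c*p := by
      nlinarith [mul_le_mul_of_nonneg_right hc4 hp0.le]
    have hpos : (0:ℝ) ≤ 3*c^4*p/76832 := by positivity
    apply sq_le_sq'
    · linarith [hcp.le]
    · nlinarith [mul_nonneg (mul_nonneg (pow_nonneg hc0.le 4) hp0.le) (by norm_num : (0:ℝ) ≤ 76829), hcp.le]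

/-- Estimate of the nonlocal part `E₂` of the error of the approximate solutions. -/
theorem statement8 (s : ℝ) (hs : s > 3/2) (σ : ℝ) (hσ₁ : 1/2 < σ) (hσ₂ : σ ≤ 1) :
    ∃ C > (0:ℝ), ∀ ω ∈ ({-1, 1} : Set ℝ), ∀ n : ℕ, 1 ≤ n → ∀ t : ℝ,
      sobolevNorm σ
        (lam (-2) (fun x =>
          14 * deriv (fun y => uapprox s ω n t y) x *
              deriv (deriv (fun y => uapprox s ω n t y)) x
            - 12 * (uapprox s ω n t x) ^ 3 * deriv (fun y => uapprox s ω n t y) x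
            + 6 * (uapprox s ω n t x) ^ 2 * deriv (fun y => uapprox s ω n t y) x
            - 20 * uapprox s ω n t x * deriv (fun y => uapprox s ω n t y) x
            - 2 * deriv (fun y => uapprox s ω n t y) x)) ≤
      C * ((n : ℝ) ^ (-2 * s + 1 + σ) + (n : ℝ) ^ (-s - 1 + σ)) := by
  refine ⟨4, by norm_num, ?_⟩
  intro ω hω n hn t
  simp only [Set.mem_insert_iff, Set.mem_singleton_iff] at hω
  have hp1 : (1:ℝ) ≤ (n:ℝ) := by exact_mod_cast hn
  have hp0 : (0:ℝ) < (n:ℝ) := by linarith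
  have hνz : (0:ℤ) < (n:ℤ) := by exact_mod_cast hn
  have hν : ((n:ℤ)) ≠ 0 := hνz.ne'
  have hc0 : (0:ℝ) < (n:ℝ)^(-s) := Real.rpow_pos_of_pos hp0 _
  have hc1 : (n:ℝ)^(-s) ≤ 1 := Real.rpow_le_one_of_one_le_of_nonpos hp1 (by linarith)
  have hi0 : (0:ℝ) < ((n:ℝ))⁻¹ := by positivity
  have hi1 : ((n:ℝ))⁻¹ ≤ 1 := by
    nlinarith [mul_inv_cancel₀ (ne_of_gt hp0)]
  have ha1 : -2 ≤ ω*((n:ℝ))⁻¹ - 1 := by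
    rcases hω with h|h <;> subst h <;> nlinarith
  have ha2 : ω*((n:ℝ))⁻¹ - 1 ≤ 0 := by
    rcases hω with h|h <;> subst h <;> nlinarith
  obtain ⟨hB1, hB2, hB3, hB4⟩ :=
    Bbounds (ω*((n:ℝ))⁻¹ - 1) ((n:ℝ)^(-s)) ((n:ℝ)) ha1 ha2 hc0 hc1 hp1
  have hg : (fun x =>
          14 * deriv (fun y => uapprox s ω n t y) x *
              deriv (deriv (fun y => uapprox s ω n t y)) x
            - 12 * (uapprox s ω n t x) ^ 3 * deriv (fun y => uapprox s ω n t y) x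
            + 6 * (uapprox s ω n t x) ^ 2 * deriv (fun y => uapprox s ω n t y) x
            - 20 * uapprox s ω n t x * deriv (fun y => uapprox s ω n t y) x
            - 2 * deriv (fun y => uapprox s ω n t y) x)
      = trig4 (((n:ℝ)^(-s))*((n:ℝ))*(-24*(ω*((n:ℝ))⁻¹ - 1)^3+168*(ω*((n:ℝ))⁻¹ - 1)^2-7840*(ω*((n:ℝ))⁻¹ - 1)-10976+42*((n:ℝ)^(-s))^2-18*(ω*((n:ℝ))⁻¹ - 1)*((n:ℝ)^(-s))^2)/76832) ((((n:ℝ)^(-s))^2*((n:ℝ))^3/28 + ((n:ℝ)^(-s))^2*((n:ℝ))*(36*(ω*((n:ℝ))⁻¹ - 1)^2-168*(ω*((n:ℝ))⁻¹ - 1)+3920+6*((n:ℝ)^(-s))^2)/76832)) (((n:ℝ)^(-s))^3*((n:ℝ))*(42-18*(ω*((n:ℝ))⁻¹ - 1))/76832) (3*((n:ℝ)^(-s))^4*((n:ℝ))/76832) ((n:ℤ)) (ω*t) := by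
    funext x
    simp only [uapprox_deriv2 s ω n t]
    simp only [uapprox_deriv1 s ω n t]
    simp only [uapprox, trig4]
    push_cast
    rw [show (1:ℝ)*((n:ℝ)*x+ω*t) = (n:ℝ)*x+ω*t by ring]
    rw [Real.sin_two_mul, sin3aux, sin4aux]
    field_simp
    ring
  rw [hg, lam_trig4 _ _ _ _ ((n:ℤ)) hν (ω*t) (-2), sobolev_trig4 _ _ _ _ ((n:ℤ)) hν (ω*t) σ,
    ← expM s σ n hp0]
  exact final_bound σ hσ₂ n hn ((((n:ℝ)^(-s))^2*((n:ℝ))^3 + ((n:ℝ)^(-s))*((n:ℝ)))) _ _ _ _ (by positivity) hB1 hB2 hB3 hB4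
end aux
end

section
/- Fix s > 3/2 and for ω ∈ {-1,1} and integers n ≥ 1 define u^{ω,n}(t,x) := ( ω n^{-1} - 1 - n^{-s} cos(n x + ω t) ) / 14, and define the error E(t,·) := u^{ω,n}_t - u^{ω,n}_x - 14 u^{ω,n} u^{ω,n}_x - ∂_x Λ^{-2} R(u^{ω,n}), where R(u) := 7 u_x² - 3 u⁴ + 2 u³ - 10 u² - 2 u. Then for every σ with 1/2 < σ ≤ 1 there exists a constant C > 0 (depending only on s and σ) such that for all t ∈ ℝ, all ω ∈ {-1,1}, and all integers n ≥ 1: ‖E(t,·)‖_{H^σ} ≤ C n^{-2s+1+σ} if 3/2 < s < 2, and ‖E(t,·)‖_{H^σ} ≤ C n^{-s-1+σ} if s ≥ 2. -/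
open MeasureTheory Filter

set_option maxHeartbeats 1000000


open MeasureTheory Filter

/-- complex trig polynomial with frequencies j*n, j ∈ [-4,4] -/
noncomputable def trigP (a : ℤ → ℂ) (n : ℕ) (x : ℝ) : ℂ :=
  ∑ j ∈ Finset.Icc (-4 : ℤ) 4, a j * Complex.exp (Complex.I * ((j : ℂ) * n) * x)

def Herm (a : ℤ → ℂ) : Prop := ∀ j, a (-j) = (starRingEnd ℂ) (a j)

lemma trigP_real (a : ℤ → ℂ) (ha : Herm a) (n : ℕ) (x : ℝ) :
    ((trigP a n x).re : ℂ) = trigP a n x := by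
  apply Complex.conj_eq_iff_re.mp
  unfold trigP
  rw [map_sum]
  refine Finset.sum_equiv (Equiv.neg ℤ) (by intro j; simp; omega) ?_
  intro j _
  rw [map_mul, ← ha, ← Complex.exp_conj]
  simp only [Equiv.neg_apply, map_mul, Complex.conj_I, Complex.conj_ofReal, map_intCast,
    map_natCast]
  push_cast
  ring_nf

lemma integral_exp_int (m : ℤ) :
    (∫ x in (0:ℝ)..(2 * Real.pi), Complex.exp (Complex.I * m * x)) =
      if m = 0 then (2 * Real.pi : ℂ) else 0 := by
  rcases eq_or_ne m 0 with h | h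
  · simp [h]
  · rw [if_neg h]
    have hc : (Complex.I * m : ℂ) ≠ 0 := by
      simp [Complex.I_ne_zero, Complex.ext_iff]
      exact_mod_cast h
    have := integral_exp_mul_complex (a := 0) (b := 2 * Real.pi) hc
    simp only [mul_assoc] at this ⊢
    rw [this]
    have h1 : Complex.exp (Complex.I * (m * (2 * Real.pi : ℝ))) = 1 := by
      rw [show (Complex.I * (m * ((2 * Real.pi : ℝ) : ℂ))) = m * (2 * Real.pi * Complex.I) by push_cast; ring]
      exact Complex.exp_int_mul_two_pi_mul_I m
    rw [h1]
    simp

/-- the k-th exponential coefficient of the trig polynomial -/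
noncomputable def coefA (a : ℤ → ℂ) (n : ℕ) (k : ℤ) : ℂ :=
  ∑ j ∈ Finset.Icc (-4 : ℤ) 4, if (j * n : ℤ) = k then a j else 0

lemma fourierCoef_trigP (a : ℤ → ℂ) (ha : Herm a) (n : ℕ) (k : ℤ) :
    fourierCoef (fun x => (trigP a n x).re) k = (Real.sqrt (2 * Real.pi) : ℂ) * coefA a n k := by
  unfold fourierCoef
  have step : ∀ x : ℝ, ((trigP a n x).re : ℂ) * Complex.exp (-Complex.I * k * x)
      = ∑ j ∈ Finset.Icc (-4 : ℤ) 4,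
          a j * Complex.exp (Complex.I * ((j * n : ℤ) - k) * x) := by
    intro x
    rw [trigP_real a ha, trigP, Finset.sum_mul]
    refine Finset.sum_congr rfl fun j _ => ?_
    rw [mul_assoc, ← Complex.exp_add]
    congr 2
    push_cast
    ring
  simp only [step]
  rw [intervalIntegral.integral_finset_sum]
  · have : ∀ j ∈ Finset.Icc (-4:ℤ) 4,
        (∫ x in (0:ℝ)..(2 * Real.pi), a j * Complex.exp (Complex.I * ((j * n : ℤ) - k) * x))
        = a j * (if ((j*n : ℤ) : ℂ) - k = 0 then (2 * Real.pi : ℂ) else 0) := by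
      intro j _
      rw [intervalIntegral.integral_const_mul]
      congr 1
      have := integral_exp_int ((j * n : ℤ) - k)
      push_cast at this ⊢
      rw [this]
      congr 1
      rw [sub_eq_zero, sub_eq_zero]
      apply propext
      constructor <;> intro h <;> exact_mod_cast h
    rw [Finset.sum_congr rfl this]
    unfold coefA
    rw [Finset.mul_sum, Finset.mul_sum]
    refine Finset.sum_congr rfl fun j _ => ?_
    have hcond : (((j*n : ℤ) : ℂ) - k = 0) ↔ ((j * n : ℤ) = k) := by
      rw [sub_eq_zero]; constructor <;> intro h <;> exact_mod_cast h
    by_cases h : (j * n : ℤ) = k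
    · rw [if_pos (hcond.mpr h), if_pos h]
      have hconst : ((2*Real.pi) ^ (-(1:ℝ)/2) : ℝ) * (2*Real.pi) = Real.sqrt (2*Real.pi) := by
        rw [Real.sqrt_eq_rpow]
        nth_rewrite 2 [← Real.rpow_one (2*Real.pi)]
        rw [← Real.rpow_add (by positivity)]
        norm_num
      rw [← hconst]
      push_cast
      ring
    · rw [if_neg (fun hc => h (hcond.mp hc)), if_neg h]
      simp
  · intro j _
    apply Continuous.intervalIntegrable
    fun_prop

example : True := trivial
lemma coefA_mul (a : ℤ → ℂ) {n : ℕ} (hn : 1 ≤ n) {j : ℤ} (hj : j ∈ Finset.Icc (-4:ℤ) 4) :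
    coefA a n (j * n) = a j := by
  unfold coefA
  have : ∀ j' : ℤ, (j' * n = j * n) ↔ j' = j := by
    intro j'
    constructor
    · intro h
      have hn' : (n:ℤ) ≠ 0 := by exact_mod_cast Nat.one_le_iff_ne_zero.mp hn
      exact mul_right_cancel₀ hn' h
    · intro h; rw [h]
  simp only [this]
  rw [Finset.sum_ite_eq' _ j a, if_pos hj]

lemma coefA_not_mem (a : ℤ → ℂ) (n : ℕ) {k : ℤ}
    (hk : k ∉ (Finset.Icc (-4:ℤ) 4).image (· * (n:ℤ))) : coefA a n k = 0 := by
  unfold coefA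
  apply Finset.sum_eq_zero
  intro j hj
  rw [if_neg]
  intro h
  exact hk (Finset.mem_image.mpr ⟨j, hj, h⟩)

lemma mul_n_injOn (n : ℕ) (hn : 1 ≤ n) : ∀ j1 ∈ Finset.Icc (-4:ℤ) 4, ∀ j2 ∈ Finset.Icc (-4:ℤ) 4,
    j1 * (n:ℤ) = j2 * (n:ℤ) → j1 = j2 := by
  intro j1 _ j2 _ h
  have hn' : (n:ℤ) ≠ 0 := by exact_mod_cast Nat.one_le_iff_ne_zero.mp hn
  exact mul_right_cancel₀ hn' h

lemma sqrtpi_mul : (((2 * Real.pi) ^ (-(1:ℝ)/2) : ℝ) : ℂ) * (Real.sqrt (2 * Real.pi) : ℝ) = 1 := by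
  have : ((2*Real.pi) ^ (-(1:ℝ)/2) : ℝ) * Real.sqrt (2*Real.pi) = 1 := by
    rw [Real.sqrt_eq_rpow, ← Real.rpow_add (by positivity)]
    norm_num
  exact_mod_cast congrArg (Complex.ofReal) this

lemma lam_trigP (r : ℝ) (a : ℤ → ℂ) (ha : Herm a) {n : ℕ} (hn : 1 ≤ n) :
    lam r (fun x => (trigP a n x).re) =
      fun x => (trigP (fun j => (((1 + ((j:ℝ) * n) ^ 2) ^ (r/2) : ℝ) : ℂ) * a j) n x).re := by
  funext x
  unfold lam
  have hsum : ∀ k : ℤ, k ∉ (Finset.Icc (-4:ℤ) 4).image (· * (n:ℤ)) →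
      ((((1 + (k : ℝ) ^ 2) ^ (r / 2) : ℝ) : ℂ)) *
        fourierCoef (fun x => (trigP a n x).re) k * Complex.exp (Complex.I * k * x) = 0 := by
    intro k hk
    rw [fourierCoef_trigP a ha, coefA_not_mem a n hk]
    simp
  rw [tsum_eq_sum hsum, Finset.sum_image (mul_n_injOn n hn), Finset.mul_sum]
  congr 1
  refine Finset.sum_congr rfl fun j hj => ?_
  rw [fourierCoef_trigP a ha, coefA_mul a hn hj]
  have hc : ((j * (n:ℤ) : ℤ) : ℝ) = (j:ℝ) * (n:ℝ) := by push_cast; ring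
  simp only [Int.cast_mul, Int.cast_natCast, hc]
  linear_combination (((1 + ((j:ℝ) * n) ^ 2) ^ (r/2) : ℝ) : ℂ) * a j *
    Complex.exp (Complex.I * ((j:ℂ) * n) * x) * sqrtpi_mul

lemma hasDerivAt_trigP (a : ℤ → ℂ) (n : ℕ) (x : ℝ) :
    HasDerivAt (fun x => (trigP a n x).re)
      ((trigP (fun j => Complex.I * ((j:ℂ) * n) * a j) n x).re) x := by
  have h : HasDerivAt (fun x : ℝ => trigP a n x)
      (trigP (fun j => Complex.I * ((j:ℂ) * n) * a j) n x) x := by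
    unfold trigP
    apply HasDerivAt.fun_sum
    intro j _
    have h0 : HasDerivAt (fun x : ℝ => ((x : ℝ) : ℂ)) 1 x := Complex.ofRealCLM.hasDerivAt
    have h1 : HasDerivAt (fun x : ℝ => Complex.I * ((j:ℂ) * n) * (x : ℂ))
        (Complex.I * ((j:ℂ) * n)) x := by
      simpa using h0.const_mul (Complex.I * ((j:ℂ) * n))
    have h2 := h1.cexp
    have h3 := h2.const_mul (a j)
    refine (h3.congr_deriv ?_ : _)
    dsimp only
    ring
  exact (Complex.reCLM.hasFDerivAt.comp_hasDerivAt x h :)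

lemma deriv_trigP (a : ℤ → ℂ) (n : ℕ) (x : ℝ) :
    deriv (fun x => (trigP a n x).re) x
      = (trigP (fun j => Complex.I * ((j:ℂ) * n) * a j) n x).re :=
  (hasDerivAt_trigP a n x).deriv

lemma sobolevNorm_trigP (σ : ℝ) (a : ℤ → ℂ) (ha : Herm a) {n : ℕ} (hn : 1 ≤ n) :
    sobolevNorm σ (fun x => (trigP a n x).re) =
      Real.sqrt (2 * Real.pi * ∑ j ∈ Finset.Icc (-4:ℤ) 4,
        (1 + ((j:ℝ) * n) ^ 2) ^ σ * ‖a j‖ ^ 2) := by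
  unfold sobolevNorm
  congr 1
  have hsum : ∀ k : ℤ, k ∉ (Finset.Icc (-4:ℤ) 4).image (· * (n:ℤ)) →
      (1 + (k : ℝ) ^ 2) ^ σ * ‖fourierCoef (fun x => (trigP a n x).re) k‖ ^ 2 = 0 := by
    intro k hk
    rw [fourierCoef_trigP a ha, coefA_not_mem a n hk]
    simp
  rw [tsum_eq_sum hsum, Finset.sum_image (mul_n_injOn n hn), Finset.mul_sum]
  refine Finset.sum_congr rfl fun j hj => ?_
  rw [fourierCoef_trigP a ha, coefA_mul a hn hj]
  rw [norm_mul, Complex.norm_real, Real.norm_of_nonneg (Real.sqrt_nonneg _)]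
  rw [mul_pow, Real.sq_sqrt (by positivity)]
  push_cast
  ring

noncomputable def cphase (φ : ℝ) (j : ℤ) : ℂ := Complex.exp (Complex.I * j * φ)

noncomputable def can (cf df : ℤ → ℝ) (φ : ℝ) : ℤ → ℂ :=
  fun j => ((cf j : ℂ) + (df j : ℂ) * Complex.I) * cphase φ j

lemma herm_can (cf df : ℤ → ℝ) (φ : ℝ) (hc : ∀ j, cf (-j) = cf j)
    (hd : ∀ j, df (-j) = -df j) : Herm (can cf df φ) := by
  intro j
  unfold can cphase
  rw [map_mul, map_add, map_mul, Complex.conj_I, Complex.conj_ofReal, Complex.conj_ofReal,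
    ← Complex.exp_conj]
  rw [hc, hd]
  simp only [map_mul, Complex.conj_I, Complex.conj_ofReal, map_intCast]
  push_cast
  ring_nf

lemma sum_Icc44 {M : Type*} [AddCommMonoid M] (f : ℤ → M) :
    ∑ j ∈ Finset.Icc (-4:ℤ) 4, f j
      = f (-4) + f (-3) + f (-2) + f (-1) + f 0 + f 1 + f 2 + f 3 + f 4 := by
  rw [show Finset.Icc (-4:ℤ) 4 = ({-4,-3,-2,-1,0,1,2,3,4} : Finset ℤ) from by decide]
  rw [show ({-4,-3,-2,-1,0,1,2,3,4} : Finset ℤ)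
      = insert (-4) (insert (-3) (insert (-2) (insert (-1) (insert 0 (insert 1 (insert 2
          (insert 3 ({4} : Finset ℤ)))))))) from rfl]
  repeat rw [Finset.sum_insert (by decide)]
  rw [Finset.sum_singleton]
  abel

lemma trigP_can_re (cf df : ℤ → ℝ) (φ : ℝ) (n : ℕ) (x : ℝ) :
    (trigP (can cf df φ) n x).re
      = ∑ j ∈ Finset.Icc (-4:ℤ) 4,
          (cf j * Real.cos ((j:ℝ) * ((n:ℝ) * x + φ))
            - df j * Real.sin ((j:ℝ) * ((n:ℝ) * x + φ))) := by
  unfold trigP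
  rw [Complex.re_sum]
  refine Finset.sum_congr rfl fun j _ => ?_
  unfold can cphase
  rw [mul_assoc, ← Complex.exp_add]
  rw [show Complex.I * (j:ℂ) * (φ:ℝ) + Complex.I * ((j:ℂ) * (n:ℕ)) * (x:ℝ)
      = ((((j:ℝ) * ((n:ℝ) * x + φ)) : ℝ) : ℂ) * Complex.I from by push_cast; ring]
  rw [Complex.exp_mul_I, ← Complex.ofReal_cos, ← Complex.ofReal_sin]
  simp only [Complex.add_re, Complex.add_im, Complex.mul_re, Complex.mul_im,
    Complex.ofReal_re, Complex.ofReal_im, Complex.I_re, Complex.I_im]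
  ring

lemma abs_can_sq (cf df : ℤ → ℝ) (φ : ℝ) (j : ℤ) :
    ‖can cf df φ j‖ ^ 2 = cf j ^ 2 + df j ^ 2 := by
  unfold can cphase
  rw [norm_mul, mul_pow, Complex.norm_exp]
  have : (Complex.I * (j:ℂ) * (φ:ℝ)).re = 0 := by simp
  rw [this, Real.exp_zero, one_pow, mul_one, Complex.sq_norm, Complex.normSq_apply]
  simp
  ring

lemma can_mul_real (ρ : ℤ → ℝ) (cf df : ℤ → ℝ) (φ : ℝ) :
    (fun j => ((ρ j : ℝ) : ℂ) * can cf df φ j)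
      = can (fun j => ρ j * cf j) (fun j => ρ j * df j) φ := by
  funext j; unfold can; push_cast; ring

lemma can_mul_I (n : ℕ) (cf df : ℤ → ℝ) (φ : ℝ) :
    (fun (j : ℤ) => Complex.I * ((j:ℂ) * n) * can cf df φ j)
      = can (fun j => -((j:ℝ) * n * df j)) (fun j => (j:ℝ) * n * cf j) φ := by
  funext j; unfold can; push_cast; ring_nf; rw [Complex.I_sq]; ring

lemma can_sub (cf1 df1 cf2 df2 : ℤ → ℝ) (φ : ℝ) :
    (fun j => can cf1 df1 φ j - can cf2 df2 φ j)
      = can (fun j => cf1 j - cf2 j) (fun j => df1 j - df2 j) φ := by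
  funext j; unfold can; push_cast; ring

lemma trigP_sub (a b : ℤ → ℂ) (n : ℕ) (x : ℝ) :
    trigP (fun j => a j - b j) n x = trigP a n x - trigP b n x := by
  unfold trigP; rw [← Finset.sum_sub_distrib]
  exact Finset.sum_congr rfl fun j _ => by ring

noncomputable def NB (s : ℝ) (n : ℕ) : ℝ := (n:ℝ) ^ (-s) / 14
noncomputable def NA (ω : ℝ) (n : ℕ) : ℝ := (ω * (n:ℝ)⁻¹ - 1) / 14

noncomputable def A0v (s ω : ℝ) (n : ℕ) : ℝ :=
  7/2 * NB s n ^2 * (n:ℝ)^2 - 3*(NA ω n^4 + 3*NA ω n^2*NB s n^2 + 3/8*NB s n^4)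
    + 2*(NA ω n^3 + 3/2*NA ω n*NB s n^2) - 10*(NA ω n^2 + NB s n^2/2) - 2*NA ω n
noncomputable def A1v (s ω : ℝ) (n : ℕ) : ℝ :=
  12*NA ω n^3*NB s n + 9*NA ω n*NB s n^3 - 6*NA ω n^2*NB s n - 3/2*NB s n^3
    + 20*NA ω n*NB s n + 2*NB s n
noncomputable def A2v (s ω : ℝ) (n : ℕ) : ℝ :=
  -(7/2)*NB s n^2*(n:ℝ)^2 - 9*NA ω n^2*NB s n^2 - 3/2*NB s n^4 + 3*NA ω n*NB s n^2
    - 5*NB s n^2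
noncomputable def A3v (s ω : ℝ) (n : ℕ) : ℝ := 3*NA ω n*NB s n^3 - NB s n^3/2
noncomputable def A4v (s : ℝ) (n : ℕ) : ℝ := -(3/8)*NB s n^4

noncomputable def cfR (s ω : ℝ) (n : ℕ) : ℤ → ℝ := fun j =>
  if j = 0 then A0v s ω n else
  if j = 1 ∨ j = -1 then A1v s ω n / 2 else
  if j = 2 ∨ j = -2 then A2v s ω n / 2 else
  if j = 3 ∨ j = -3 then A3v s ω n / 2 else
  if j = 4 ∨ j = -4 then A4v s n / 2 else 0

def zf : ℤ → ℝ := fun _ => 0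

noncomputable def cfRL (s ω : ℝ) (n : ℕ) : ℤ → ℝ := fun j =>
  (1 + ((j:ℝ) * (n:ℕ)) ^ 2)⁻¹ * cfR s ω n j

noncomputable def dfG (s : ℝ) (n : ℕ) : ℤ → ℝ := fun j =>
  if j = 2 then -(7 * NB s n^2 * (n:ℝ) / 2) else
  if j = -2 then 7 * NB s n^2 * (n:ℝ) / 2 else 0

noncomputable def dfE (s ω : ℝ) (n : ℕ) : ℤ → ℝ := fun j =>
  dfG s n j - (j:ℝ) * (n:ℝ) * cfRL s ω n j

lemma cfR_even (s ω : ℝ) (n : ℕ) : ∀ j, cfR s ω n (-j) = cfR s ω n j := by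
  intro j
  unfold cfR
  have h0 : (-j = 0) ↔ (j = 0) := by omega
  have h1 : (-j = 1 ∨ -j = -1) ↔ (j = 1 ∨ j = -1) := by omega
  have h2 : (-j = 2 ∨ -j = -2) ↔ (j = 2 ∨ j = -2) := by omega
  have h3 : (-j = 3 ∨ -j = -3) ↔ (j = 3 ∨ j = -3) := by omega
  have h4 : (-j = 4 ∨ -j = -4) ↔ (j = 4 ∨ j = -4) := by omega
  simp only [h0, h1, h2, h3, h4]

lemma cfRL_even (s ω : ℝ) (n : ℕ) : ∀ j, cfRL s ω n (-j) = cfRL s ω n j := by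
  intro j
  unfold cfRL
  rw [cfR_even]
  have : ((-j : ℤ) : ℝ) = -(j:ℝ) := by push_cast; ring
  rw [this]
  ring_nf

lemma dfG_odd (s : ℝ) (n : ℕ) : ∀ j, dfG s n (-j) = -dfG s n j := by
  intro j
  unfold dfG
  rcases eq_or_ne j 2 with h | h
  · subst h; norm_num
  rcases eq_or_ne j (-2) with h' | h'
  · subst h'; norm_num
  rw [if_neg (by omega), if_neg (by omega), if_neg h, if_neg h']
  ring

lemma dfE_odd (s ω : ℝ) (n : ℕ) : ∀ j, dfE s ω n (-j) = -dfE s ω n j := by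
  intro j
  unfold dfE
  rw [dfG_odd, cfRL_even]
  push_cast
  ring

lemma herm_aE (s ω : ℝ) (n : ℕ) (φ : ℝ) : Herm (can zf (dfE s ω n) φ) :=
  herm_can _ _ _ (fun _ => rfl) (dfE_odd s ω n)

lemma herm_aR (s ω : ℝ) (n : ℕ) (φ : ℝ) : Herm (can (cfR s ω n) zf φ) :=
  herm_can _ _ _ (cfR_even s ω n) (fun _ => by simp [zf])

lemma L_u (s ω : ℝ) (n : ℕ) (t x : ℝ) :
    uapprox s ω n t x = NA ω n - NB s n * Real.cos ((n:ℝ) * x + ω * t) := by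
  unfold uapprox NA NB; ring

lemma L_px (s ω : ℝ) (n : ℕ) (t x : ℝ) :
    HasDerivAt (fun y => uapprox s ω n t y)
      (NB s n * (n:ℝ) * Real.sin ((n:ℝ) * x + ω * t)) x := by
  have h : HasDerivAt (fun y : ℝ => (n:ℝ) * y + ω * t) (n:ℝ) x := by
    simpa using ((hasDerivAt_id x).const_mul (n:ℝ)).add_const (ω * t)
  have h2 := h.cos
  have h3 := (((h2.const_mul ((n:ℝ) ^ (-s))).const_sub (ω * (n:ℝ)⁻¹ - 1)).div_const 14)
  refine (h3.congr_deriv ?_ : _)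
  unfold NB; ring

lemma L_pt (s ω : ℝ) (n : ℕ) (t x : ℝ) :
    HasDerivAt (fun τ => uapprox s ω n τ x)
      (NB s n * ω * Real.sin ((n:ℝ) * x + ω * t)) t := by
  have h : HasDerivAt (fun τ : ℝ => (n:ℝ) * x + ω * τ) ω t := by
    simpa using ((hasDerivAt_id t).const_mul ω).const_add ((n:ℝ) * x)
  have h2 := h.cos
  have h3 := (((h2.const_mul ((n:ℝ) ^ (-s))).const_sub (ω * (n:ℝ)⁻¹ - 1)).div_const 14)
  refine (h3.congr_deriv ?_ : _)
  unfold NB; ring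

lemma L_R (s ω : ℝ) (n : ℕ) (t : ℝ) :
    Rop (fun y => uapprox s ω n t y)
      = fun x => (trigP (can (cfR s ω n) zf (ω * t)) n x).re := by
  funext x
  unfold Rop
  rw [(L_px s ω n t x).deriv]
  simp only [L_u s ω n t]
  rw [trigP_can_re, sum_Icc44]
  set ψ := (n:ℝ) * x + ω * t with hψ
  simp only [cfR, zf]
  norm_num
  rw [show (4:ℝ) * ψ = 2*(2*ψ) by ring, Real.cos_two_mul (2*ψ), Real.cos_two_mul ψ,
    Real.cos_three_mul ψ]
  unfold A0v A1v A2v A3v A4v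
  linear_combination (7 * NB s n ^ 2 * (n:ℝ) ^ 2) * Real.sin_sq_add_cos_sq ψ

lemma L_lam (s ω : ℝ) (n : ℕ) (hn : 1 ≤ n) (t : ℝ) :
    lam (-2) (Rop (fun y => uapprox s ω n t y))
      = fun x => (trigP (can (cfRL s ω n) zf (ω * t)) n x).re := by
  rw [L_R s ω n t, lam_trigP (-2) _ (herm_aR s ω n (ω*t)) hn]
  have hfun : (fun j : ℤ => (((1 + ((j:ℝ) * n) ^ 2) ^ ((-2:ℝ)/2) : ℝ) : ℂ)
        * can (cfR s ω n) zf (ω*t) j) = can (cfRL s ω n) zf (ω*t) := by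
    funext j
    rw [show ((1 + ((j:ℝ) * n) ^ 2) ^ ((-2:ℝ)/2) : ℝ) = (1 + ((j:ℝ) * n) ^ 2)⁻¹ from by
      rw [show ((-2:ℝ)/2) = (-1:ℝ) by norm_num, Real.rpow_neg_one]]
    unfold can cfRL zf
    push_cast
    ring
  rw [hfun]

lemma L_E (s ω : ℝ) (n : ℕ) (hn : 1 ≤ n) (t : ℝ) :
    (fun x => pt (uapprox s ω n) t x - px (uapprox s ω n) t x
        - 14 * uapprox s ω n t x * px (uapprox s ω n) t x
        - deriv (lam (-2) (Rop (fun y => uapprox s ω n t y))) x)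
      = fun x => (trigP (can zf (dfE s ω n) (ω * t)) n x).re := by
  funext x
  have hN : (n:ℝ) ≠ 0 := by positivity
  unfold pt px
  rw [(L_px s ω n t x).deriv, (L_pt s ω n t x).deriv, L_u s ω n t x]
  rw [L_lam s ω n hn t, deriv_trigP, can_mul_I]
  rw [trigP_can_re, trigP_can_re, sum_Icc44, sum_Icc44]
  set ψ := (n:ℝ) * x + ω * t with hψ
  simp only [dfE, dfG, cfRL, cfR, zf]
  norm_num
  rw [Real.sin_two_mul]
  unfold NA
  field_simp
  ring

lemma dfE0 (s ω : ℝ) (n : ℕ) : dfE s ω n 0 = 0 := by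
  unfold dfE dfG cfRL cfR; norm_num

lemma dfE1val (s ω : ℝ) (n : ℕ) :
    dfE s ω n 1 = -(((n:ℝ) * (1 + (n:ℝ)^2)⁻¹ / 2) * A1v s ω n) := by
  unfold dfE dfG cfRL cfR; norm_num; ring

lemma dfE2val (s ω : ℝ) (n : ℕ) :
    dfE s ω n 2 = -(7 * NB s n^2 * (n:ℝ) / 2
      + ((n:ℝ) * (1 + (2*(n:ℝ))^2)⁻¹) * A2v s ω n) := by
  unfold dfE dfG cfRL cfR; norm_num; ring

lemma dfE3val (s ω : ℝ) (n : ℕ) :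
    dfE s ω n 3 = -((3 * (n:ℝ) * (1 + (3*(n:ℝ))^2)⁻¹ / 2) * A3v s ω n) := by
  unfold dfE dfG cfRL cfR; norm_num; ring

lemma dfE4val (s ω : ℝ) (n : ℕ) :
    dfE s ω n 4 = -((2 * (n:ℝ) * (1 + (4*(n:ℝ))^2)⁻¹) * A4v s n) := by
  unfold dfE dfG cfRL cfR; norm_num; ring

lemma key_est (σ : ℝ) (hσ0 : 0 ≤ σ) (hσ2 : σ ≤ 1) (N : ℝ) (hN : 1 ≤ N)
    (k : ℝ) (hk : k^2 ≤ 16) (d c : ℝ) (hd : |d| ≤ c) :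
    (1 + (k*N)^2)^σ * d^2 ≤ 17 * N^(2*σ) * c^2 := by
  have hN0 : (0:ℝ) < N := lt_of_lt_of_le one_pos hN
  have h1 : (1 + (k*N)^2) ≤ 17*N^2 := by nlinarith [sq_nonneg k, sq_nonneg N, sq_nonneg (k*N)]
  have h2 : (1 + (k*N)^2)^σ ≤ (17*N^2)^σ := Real.rpow_le_rpow (by positivity) h1 hσ0
  have h3 : ((17:ℝ)*N^2)^σ = (17:ℝ)^σ * (N^2)^σ := Real.mul_rpow (by norm_num) (by positivity)
  have h4 : (17:ℝ)^σ ≤ 17 := by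
    calc (17:ℝ)^σ ≤ (17:ℝ)^(1:ℝ) := Real.rpow_le_rpow_of_exponent_le (by norm_num) hσ2
    _ = 17 := Real.rpow_one 17
  have h5 : ((N^2:ℝ))^σ = N^(2*σ) := by
    rw [← Real.rpow_natCast N 2, ← Real.rpow_mul hN0.le]
    norm_num
  have hrn : (0:ℝ) ≤ N^(2*σ) := Real.rpow_nonneg hN0.le _
  have h6 : (1 + (k*N)^2)^σ ≤ 17 * N^(2*σ) := by
    rw [h3, h5] at h2
    nlinarith
  have hc : 0 ≤ c := le_trans (abs_nonneg d) hd
  have h7 : d^2 ≤ c^2 := by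
    rw [← sq_abs d]; nlinarith [abs_nonneg d]
  have hbase : (0:ℝ) ≤ (1 + (k*N)^2)^σ := Real.rpow_nonneg (by positivity) σ
  calc (1 + (k*N)^2)^σ * d^2 ≤ (17 * N^(2*σ)) * c^2 := by
        apply mul_le_mul h6 h7 (sq_nonneg d) (by positivity)


lemma pb1 (a β : ℝ) (ha1 : -(1/7) ≤ a) (ha2 : a ≤ 1/7) (hb0 : 0 < β) (hb : β ≤ 1/14) :
    |β * (12*a^3 + 9*a*β^2 - 6*a^2 - 3/2*β^2 + 20*a + 2)| ≤ 6*β := by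
  rw [abs_mul, abs_of_pos hb0]
  have hP : |12*a^3 + 9*a*β^2 - 6*a^2 - 3/2*β^2 + 20*a + 2| ≤ 6 := by
    apply abs_le.mpr
    constructor <;>
      nlinarith [sq_nonneg a, sq_nonneg β, mul_nonneg (sub_nonneg.mpr ha2) (sq_nonneg a),
        mul_nonneg (sub_nonneg.mpr (show -(1/7:ℝ) ≤ a from ha1)) (sq_nonneg a),
        mul_nonneg (mul_nonneg (sub_nonneg.mpr ha2) hb0.le) hb0.le,
        mul_nonneg (mul_nonneg (sub_nonneg.mpr (show -(1/7:ℝ) ≤ a from ha1)) hb0.le) hb0.le,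
        mul_pos hb0 hb0]
  nlinarith [abs_nonneg (12*a^3 + 9*a*β^2 - 6*a^2 - 3/2*β^2 + 20*a + 2)]

lemma pb2 (a β Nv : ℝ) (ha1 : -(1/7) ≤ a) (ha2 : a ≤ 1/7) (hb0 : 0 < β) (hb : β ≤ 1/14)
    (hN : 1 ≤ Nv) :
    |β^2 * (-(7/2)*Nv^2 - 9*a^2 - 3/2*β^2 + 3*a - 5)| ≤ 10 * β^2 * Nv^2 := by
  rw [abs_mul, abs_of_pos (by positivity : (0:ℝ) < β^2)]
  have hQ : |(-(7/2)*Nv^2 - 9*a^2 - 3/2*β^2 + 3*a - 5)| ≤ 10 * Nv^2 := by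
    apply abs_le.mpr
    constructor <;> nlinarith [sq_nonneg a, sq_nonneg β, mul_pos hb0 hb0]
  nlinarith [abs_nonneg (-(7/2)*Nv^2 - 9*a^2 - 3/2*β^2 + 3*a - 5), sq_nonneg β]

lemma pb3 (a β : ℝ) (ha1 : -(1/7) ≤ a) (ha2 : a ≤ 1/7) (hb0 : 0 < β) :
    |β^3 * (3*a - 1/2)| ≤ β^3 := by
  rw [abs_mul, abs_of_pos (by positivity : (0:ℝ) < β^3)]
  have hQ : |3*a - 1/2| ≤ 1 := abs_le.mpr ⟨by linarith, by linarith⟩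
  nlinarith [abs_nonneg (3*a - 1/2), pow_pos hb0 3]

lemma pb4 (β : ℝ) (hb0 : 0 < β) : |β^4 * (-(3/8))| ≤ β^4 := by
  rw [abs_mul, abs_of_pos (by positivity : (0:ℝ) < β^4)]
  rw [show |(-(3/8):ℝ)| = 3/8 from by norm_num]
  nlinarith [pow_pos hb0 4]
lemma pd1 (β Nv A : ℝ) (hb0 : 0 < β) (hN : 1 ≤ Nv) (hA : |A| ≤ 6*β) :
    |(-(Nv*(1+Nv^2)⁻¹/2 * A))| ≤ 3*β*Nv⁻¹ := by
  have hN0 : (0:ℝ) < Nv := by linarith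
  rw [abs_neg, abs_mul, abs_of_nonneg (show (0:ℝ) ≤ Nv*(1+Nv^2)⁻¹/2 by positivity)]
  have hq : Nv * (1+Nv^2)⁻¹ ≤ Nv⁻¹ := by
    rw [← div_eq_mul_inv, ← one_div, div_le_div_iff₀ (by positivity) hN0]
    nlinarith
  have h1 : Nv*(1+Nv^2)⁻¹/2 * |A| ≤ Nv*(1+Nv^2)⁻¹/2 * (6*β) :=
    mul_le_mul_of_nonneg_left hA (by positivity)
  nlinarith [mul_le_mul_of_nonneg_right hq (by positivity : (0:ℝ) ≤ 3*β)]

lemma pd2 (β Nv A : ℝ) (hb0 : 0 < β) (hN : 1 ≤ Nv) (hA : |A| ≤ 10*β^2*Nv^2) :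
    |(-(7*β^2*Nv/2 + Nv*(1+(2*Nv)^2)⁻¹ * A))| ≤ 6*β^2*Nv := by
  have hN0 : (0:ℝ) < Nv := by linarith
  rw [abs_neg]
  have habs := abs_add_le (7*β^2*Nv/2) (Nv*(1+(2*Nv)^2)⁻¹ * A)
  rw [abs_mul, abs_of_nonneg (show (0:ℝ) ≤ Nv*(1+(2*Nv)^2)⁻¹ by positivity),
    abs_of_nonneg (show (0:ℝ) ≤ 7*β^2*Nv/2 by positivity)] at habs
  have h2 : Nv*(1+(2*Nv)^2)⁻¹ * |A| ≤ Nv*(1+(2*Nv)^2)⁻¹ * (10*β^2*Nv^2) :=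
    mul_le_mul_of_nonneg_left hA (by positivity)
  have hq : Nv^3 * (1+(2*Nv)^2)⁻¹ ≤ Nv / 4 := by
    rw [← div_eq_mul_inv, div_le_div_iff₀ (by positivity) (by norm_num)]
    nlinarith [sq_nonneg Nv]
  nlinarith [mul_le_mul_of_nonneg_right hq (by positivity : (0:ℝ) ≤ 10*β^2)]

lemma pd3 (β Nv A : ℝ) (hb0 : 0 < β) (hb : β ≤ 1) (hN : 1 ≤ Nv) (hA : |A| ≤ β^3) :
    |(-(3*Nv*(1+(3*Nv)^2)⁻¹/2 * A))| ≤ β*Nv⁻¹ := by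
  have hN0 : (0:ℝ) < Nv := by linarith
  rw [abs_neg, abs_mul, abs_of_nonneg (show (0:ℝ) ≤ 3*Nv*(1+(3*Nv)^2)⁻¹/2 by positivity)]
  have hq : 3*Nv*(1+(3*Nv)^2)⁻¹/2 ≤ Nv⁻¹ := by
    rw [show 3*Nv*(1+(3*Nv)^2)⁻¹/2 = (3*Nv/2)/(1+(3*Nv)^2) from by ring, ← one_div,
      div_le_div_iff₀ (by positivity) hN0]
    nlinarith
  have hb3 : β^3 ≤ β := by nlinarith [sq_nonneg β, sq_nonneg (β-1), mul_pos hb0 hb0]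
  calc 3*Nv*(1+(3*Nv)^2)⁻¹/2 * |A| ≤ Nv⁻¹ * β := by
        apply mul_le_mul hq (le_trans hA hb3) (abs_nonneg A) (by positivity)
    _ = β * Nv⁻¹ := by ring

lemma pd4 (β Nv A : ℝ) (hb0 : 0 < β) (hb : β ≤ 1) (hN : 1 ≤ Nv) (hA : |A| ≤ β^4) :
    |(-(2*Nv*(1+(4*Nv)^2)⁻¹ * A))| ≤ β*Nv⁻¹ := by
  have hN0 : (0:ℝ) < Nv := by linarith
  rw [abs_neg, abs_mul, abs_of_nonneg (show (0:ℝ) ≤ 2*Nv*(1+(4*Nv)^2)⁻¹ by positivity)]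
  have hq : 2*Nv*(1+(4*Nv)^2)⁻¹ ≤ Nv⁻¹ := by
    rw [show 2*Nv*(1+(4*Nv)^2)⁻¹ = (2*Nv)/(1+(4*Nv)^2) from by ring, ← one_div,
      div_le_div_iff₀ (by positivity) hN0]
    nlinarith
  have hb4 : β^4 ≤ β := by nlinarith [sq_nonneg β, sq_nonneg (β^2), mul_pos hb0 hb0, mul_pos (mul_pos hb0 hb0) hb0, sq_nonneg (β-1), mul_nonneg (mul_nonneg hb0.le hb0.le) (sq_nonneg (β-1))]
  calc 2*Nv*(1+(4*Nv)^2)⁻¹ * |A| ≤ Nv⁻¹ * β := by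
        apply mul_le_mul hq (le_trans hA hb4) (abs_nonneg A) (by positivity)
    _ = β * Nv⁻¹ := by ring

lemma L_norm (s σ ω : ℝ) (n : ℕ) (hn : 1 ≤ n) (t : ℝ) :
    sobolevNorm σ (fun x =>
      pt (uapprox s ω n) t x - px (uapprox s ω n) t x
        - 14 * uapprox s ω n t x * px (uapprox s ω n) t x
        - deriv (lam (-2) (Rop (fun y => uapprox s ω n t y))) x)
    = Real.sqrt (2 * Real.pi * ∑ j ∈ Finset.Icc (-4:ℤ) 4,
        (1 + ((j:ℝ) * n)^2)^σ * dfE s ω n j^2) := by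
  rw [L_E s ω n hn t, sobolevNorm_trigP σ _ (herm_aE s ω n (ω*t)) hn]
  congr 2
  refine Finset.sum_congr rfl fun j _ => ?_
  rw [abs_can_sq]
  simp [zf]

lemma main_est (s σ ω : ℝ) (hω : ω = -1 ∨ ω = 1) (hs : 3/2 < s) (hσ₁ : 1/2 < σ)
    (hσ₂ : σ ≤ 1) (n : ℕ) (hn : 1 ≤ n) (t : ℝ) (e : ℝ)
    (hE1 : 2*σ - 2*s - 2 ≤ 2*e) (hE2 : 2*σ - 4*s + 2 ≤ 2*e) :
    sobolevNorm σ (fun x =>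
      pt (uapprox s ω n) t x - px (uapprox s ω n) t x
        - 14 * uapprox s ω n t x * px (uapprox s ω n) t x
        - deriv (lam (-2) (Rop (fun y => uapprox s ω n t y))) x) ≤ 100 * (n:ℝ)^e := by
  have hN : (1:ℝ) ≤ (n:ℝ) := by exact_mod_cast hn
  have hN0 : (0:ℝ) < (n:ℝ) := by linarith
  set N := (n:ℝ) with hNdef
  have hσ0 : (0:ℝ) ≤ σ := by linarith
  have hβ1 : N^(-s) ≤ 1 := Real.rpow_le_one_of_one_le_of_nonpos hN (by linarith)
  have hβ0 : 0 < N^(-s) := Real.rpow_pos_of_pos hN0 _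
  have hb0 : 0 < NB s n := by unfold NB; positivity
  have hb : NB s n ≤ 1/14 := by unfold NB; linarith
  have hi0 : (0:ℝ) ≤ N⁻¹ := by positivity
  have hi1 : N⁻¹ ≤ 1 := by
    rw [inv_le_one_iff₀]; right; exact hN
  have ha : |NA ω n| ≤ 1/7 := by
    unfold NA
    rcases hω with h | h <;> subst h <;> exact abs_le.mpr ⟨by linarith, by linarith⟩
  obtain ⟨ha1, ha2⟩ := abs_le.mp ha
  -- bounds on the A coefficients
  have hA1 : |A1v s ω n| ≤ 6 * NB s n := by
    rw [show A1v s ω n = NB s n * (12*NA ω n^3 + 9*NA ω n*NB s n^2 - 6*NA ω n^2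
        - 3/2*NB s n^2 + 20*NA ω n + 2) from by unfold A1v; ring]
    exact pb1 (NA ω n) (NB s n) ha1 ha2 hb0 hb
  have hA2 : |A2v s ω n| ≤ 10 * NB s n^2 * N^2 := by
    rw [show A2v s ω n = NB s n^2 * (-(7/2)*N^2 - 9*NA ω n^2 - 3/2*NB s n^2
        + 3*NA ω n - 5) from by unfold A2v; ring]
    exact pb2 (NA ω n) (NB s n) N ha1 ha2 hb0 hb hN
  have hA3 : |A3v s ω n| ≤ NB s n^3 := by
    rw [show A3v s ω n = NB s n^3 * (3*NA ω n - 1/2) from by unfold A3v; ring]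
    exact pb3 (NA ω n) (NB s n) ha1 ha2 hb0
  have hA4 : |A4v s n| ≤ NB s n^4 := by
    rw [show A4v s n = NB s n^4 * (-(3/8)) from by unfold A4v; ring]
    exact pb4 (NB s n) hb0
  have hble : NB s n ≤ 1 := by linarith
  -- bounds on dfE
  have hd1 : |dfE s ω n 1| ≤ 3 * NB s n * N⁻¹ := by
    rw [dfE1val]
    exact pd1 (NB s n) N (A1v s ω n) hb0 hN hA1
  have hd2 : |dfE s ω n 2| ≤ 6 * NB s n^2 * N := by
    rw [dfE2val]
    exact pd2 (NB s n) N (A2v s ω n) hb0 hN hA2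
  have hd3 : |dfE s ω n 3| ≤ NB s n * N⁻¹ := by
    rw [dfE3val]
    exact pd3 (NB s n) N (A3v s ω n) hb0 hble hN hA3
  have hd4 : |dfE s ω n 4| ≤ NB s n * N⁻¹ := by
    rw [dfE4val]
    exact pd4 (NB s n) N (A4v s n) hb0 hble hN hA4
  have hd1' : |dfE s ω n (-1)| ≤ 3 * NB s n * N⁻¹ := by
    rw [show ((-1):ℤ) = -(1:ℤ) from rfl, dfE_odd, abs_neg]; exact hd1
  have hd2' : |dfE s ω n (-2)| ≤ 6 * NB s n^2 * N := by
    rw [show ((-2):ℤ) = -(2:ℤ) from rfl, dfE_odd, abs_neg]; exact hd2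
  have hd3' : |dfE s ω n (-3)| ≤ NB s n * N⁻¹ := by
    rw [show ((-3):ℤ) = -(3:ℤ) from rfl, dfE_odd, abs_neg]; exact hd3
  have hd4' : |dfE s ω n (-4)| ≤ NB s n * N⁻¹ := by
    rw [show ((-4):ℤ) = -(4:ℤ) from rfl, dfE_odd, abs_neg]; exact hd4
  -- sum bound
  have hS : (∑ j ∈ Finset.Icc (-4:ℤ) 4, (1 + ((j:ℝ) * N)^2)^σ * dfE s ω n j^2)
      ≤ 17 * N^(2*σ) * (2*((3*NB s n*N⁻¹)^2 + (6*NB s n^2*N)^2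
          + (NB s n*N⁻¹)^2 + (NB s n*N⁻¹)^2)) := by
    rw [sum_Icc44]
    push_cast
    have hT1 := key_est σ hσ0 hσ₂ N hN 1 (by norm_num) _ _ hd1
    have hT2 := key_est σ hσ0 hσ₂ N hN 2 (by norm_num) _ _ hd2
    have hT3 := key_est σ hσ0 hσ₂ N hN 3 (by norm_num) _ _ hd3
    have hT4 := key_est σ hσ0 hσ₂ N hN 4 (by norm_num) _ _ hd4
    have hT1' := key_est σ hσ0 hσ₂ N hN (-1) (by norm_num) _ _ hd1'
    have hT2' := key_est σ hσ0 hσ₂ N hN (-2) (by norm_num) _ _ hd2'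
    have hT3' := key_est σ hσ0 hσ₂ N hN (-3) (by norm_num) _ _ hd3'
    have hT4' := key_est σ hσ0 hσ₂ N hN (-4) (by norm_num) _ _ hd4'
    have h0 : (1 + ((0:ℝ) * N)^2)^σ * dfE s ω n 0^2 = 0 := by
      rw [dfE0]; ring
    calc (1 + (-4*N)^2)^σ * dfE s ω n (-4)^2 + (1 + (-3*N)^2)^σ * dfE s ω n (-3)^2
          + (1 + (-2*N)^2)^σ * dfE s ω n (-2)^2 + (1 + (-1*N)^2)^σ * dfE s ω n (-1)^2
          + (1 + (0*N)^2)^σ * dfE s ω n 0^2 + (1 + (1*N)^2)^σ * dfE s ω n 1^2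
          + (1 + (2*N)^2)^σ * dfE s ω n 2^2 + (1 + (3*N)^2)^σ * dfE s ω n 3^2
          + (1 + (4*N)^2)^σ * dfE s ω n 4^2
        ≤ 17*N^(2*σ)*(NB s n*N⁻¹)^2 + 17*N^(2*σ)*(NB s n*N⁻¹)^2
          + 17*N^(2*σ)*(6*NB s n^2*N)^2 + 17*N^(2*σ)*(3*NB s n*N⁻¹)^2 + 0
          + 17*N^(2*σ)*(3*NB s n*N⁻¹)^2 + 17*N^(2*σ)*(6*NB s n^2*N)^2
          + 17*N^(2*σ)*(NB s n*N⁻¹)^2 + 17*N^(2*σ)*(NB s n*N⁻¹)^2 := by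
          exact add_le_add (add_le_add (add_le_add (add_le_add (add_le_add (add_le_add
            (add_le_add (add_le_add hT4' hT3') hT2') hT1') h0.le) hT1) hT2) hT3) hT4
      _ = 17 * N^(2*σ) * (2*((3*NB s n*N⁻¹)^2 + (6*NB s n^2*N)^2
          + (NB s n*N⁻¹)^2 + (NB s n*N⁻¹)^2)) := by ring
  -- rpow conversions
  have hrw : ∀ a b : ℝ, N^a * N^b = N^(a+b) := fun a b => (Real.rpow_add hN0 a b).symm
  have hiN : N⁻¹ = N^(-1:ℝ) := (Real.rpow_neg_one N).symm
  have hN2 : (N:ℝ)^2 = N^(2:ℝ) := by rw [← Real.rpow_natCast N 2]; norm_num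
  have he1 : N^(2*σ) * (NB s n^2 * (N⁻¹)^2) = (1/196) * N^(2*σ - 2*s - 2) := by
    unfold NB
    rw [hiN, show N^(2*σ) * ((N^(-s)/14)^2 * (N^(-1:ℝ))^2)
      = (1/196) * (N^(2*σ) * N^(-s) * N^(-s) * N^(-1:ℝ) * N^(-1:ℝ)) from by ring]
    rw [hrw, hrw, hrw, hrw]
    congr 1
    congr 1
    ring
  have he2 : N^(2*σ) * (NB s n^4 * N^2) = (1/38416) * N^(2*σ - 4*s + 2) := by
    unfold NB
    rw [hN2, show N^(2*σ) * ((N^(-s)/14)^4 * N^(2:ℝ))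
      = (1/38416) * (N^(2*σ) * N^(-s) * N^(-s) * N^(-s) * N^(-s) * N^(2:ℝ)) from by ring]
    rw [hrw, hrw, hrw, hrw, hrw]
    congr 1
    congr 1
    ring
  have hc1 : N^(2*σ - 2*s - 2) ≤ N^(2*e) := Real.rpow_le_rpow_of_exponent_le hN hE1
  have hc2 : N^(2*σ - 4*s + 2) ≤ N^(2*e) := Real.rpow_le_rpow_of_exponent_le hN hE2
  have hrp : (0:ℝ) < N^(2*σ) := Real.rpow_pos_of_pos hN0 _
  have hrpe : (0:ℝ) < N^e := Real.rpow_pos_of_pos hN0 _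
  have hB : (∑ j ∈ Finset.Icc (-4:ℤ) 4, (1 + ((j:ℝ) * N)^2)^σ * dfE s ω n j^2)
      ≤ 34 * (11 * (N^(2*σ) * (NB s n^2 * (N⁻¹)^2)) + 36 * (N^(2*σ) * (NB s n^4 * N^2))) :=
    hS.trans (le_of_eq (by ring))
  have hB2 : (∑ j ∈ Finset.Icc (-4:ℤ) 4, (1 + ((j:ℝ) * N)^2)^σ * dfE s ω n j^2)
      ≤ 34 * (11 * ((1/196) * N^(2*e)) + 36 * ((1/38416) * N^(2*e))) := by
    rw [he1, he2] at hB
    refine hB.trans ?_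
    have h196 : (0:ℝ) < 196 := by norm_num
    linarith [hc1, hc2]
  have hrr : (0:ℝ) < N^(2*e) := Real.rpow_pos_of_pos hN0 _
  have key2 : 2 * Real.pi * (∑ j ∈ Finset.Icc (-4:ℤ) 4,
      (1 + ((j:ℝ) * N)^2)^σ * dfE s ω n j^2) ≤ (100 * N^e)^2 := by
    have hπ : Real.pi ≤ 4 := Real.pi_le_four
    have hπ0 : 0 < Real.pi := Real.pi_pos
    have hee : (100 * N^e)^2 = 10000 * N^(2*e) := by
      have h : (N^e)^(2:ℕ) = N^(2*e) := by
        rw [← Real.rpow_natCast (N^e) 2, ← Real.rpow_mul hN0.le]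
        norm_num [mul_comm]
      rw [mul_pow, h]
      norm_num
    rw [hee]
    have hM0 : (0:ℝ) ≤ 34 * (11 * ((1/196) * N^(2*e)) + 36 * ((1/38416) * N^(2*e))) := by
      positivity
    have l1 := mul_le_mul_of_nonneg_left hB2 (by positivity : (0:ℝ) ≤ 2*Real.pi)
    have l2 := mul_le_mul_of_nonneg_right (show 2*Real.pi ≤ 8 by linarith) hM0
    have l3 : 8 * (34 * (11 * ((1/196) * N^(2*e)) + 36 * ((1/38416) * N^(2*e))))
        ≤ 10000 * N^(2*e) := by linarith [hrr.le]
    calc 2 * Real.pi * (∑ j ∈ Finset.Icc (-4:ℤ) 4, (1 + ((j:ℝ) * N)^2)^σ * dfE s ω n j^2)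
        ≤ 2 * Real.pi * (34 * (11 * ((1/196) * N^(2*e)) + 36 * ((1/38416) * N^(2*e)))) := l1
      _ ≤ 8 * (34 * (11 * ((1/196) * N^(2*e)) + 36 * ((1/38416) * N^(2*e)))) := l2
      _ ≤ 10000 * N^(2*e) := l3
  rw [L_norm s σ ω n hn t]
  calc Real.sqrt (2 * Real.pi * ∑ j ∈ Finset.Icc (-4:ℤ) 4,
        (1 + ((j:ℝ) * N)^2)^σ * dfE s ω n j^2)
      ≤ Real.sqrt ((100 * N^e)^2) := Real.sqrt_le_sqrt key2
    _ = 100 * N^e := Real.sqrt_sq (by positivity)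


/-- Estimate of the full error `E = u^{ω,n}_t - u^{ω,n}_x - 14 u^{ω,n} u^{ω,n}_x
- ∂_x Λ^{-2} R(u^{ω,n})` of the approximate solutions. -/
theorem statement9 (s : ℝ) (hs : s > 3/2) (σ : ℝ) (hσ₁ : 1/2 < σ) (hσ₂ : σ ≤ 1) :
    ∃ C > (0:ℝ), ∀ ω ∈ ({-1, 1} : Set ℝ), ∀ n : ℕ, 1 ≤ n → ∀ t : ℝ,
      (s < 2 →
        sobolevNorm σ (fun x =>
          pt (uapprox s ω n) t x - px (uapprox s ω n) t x
            - 14 * uapprox s ω n t x * px (uapprox s ω n) t x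
            - deriv (lam (-2) (Rop (fun y => uapprox s ω n t y))) x) ≤
          C * (n : ℝ) ^ (-2 * s + 1 + σ)) ∧
      (2 ≤ s →
        sobolevNorm σ (fun x =>
          pt (uapprox s ω n) t x - px (uapprox s ω n) t x
            - 14 * uapprox s ω n t x * px (uapprox s ω n) t x
            - deriv (lam (-2) (Rop (fun y => uapprox s ω n t y))) x) ≤
          C * (n : ℝ) ^ (-s - 1 + σ)) := by
  
  refine ⟨100, by norm_num, ?_⟩
  intro ω hω n hn t
  have hω' : ω = -1 ∨ ω = 1 := by simpa using hω
  constructor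
  · intro hs2
    exact main_est s σ ω hω' hs hσ₁ hσ₂ n hn t (-2*s+1+σ) (by linarith) (by linarith)
  · intro hs2
    exact main_est s σ ω hω' hs hσ₁ hσ₂ n hn t (-s-1+σ) (by linarith) (by linarith)
end

section
/- Fix s > 3/2 and for ω ∈ {-1,1} and integers n ≥ 1 define u^{ω,n}(t,x) := ( ω n^{-1} - 1 - n^{-s} cos(n x + ω t) ) / 14. Then for all t ∈ ℝ and all integers n ≥ 1: ‖u^{1,n}(t,·) - u^{-1,n}(t,·)‖_{H^s} ≥ (√π / 7) |sin t| - (√(2π) / 7) n^{-1}. -/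
open MeasureTheory Filter

lemma expInt (m : ℤ) :
    (∫ x in (0:ℝ)..(2*Real.pi), Complex.exp (Complex.I * m * x)) =
      if m = 0 then ((2*Real.pi : ℝ) : ℂ) else 0 := by
  by_cases hm : m = 0
  · simp [hm]
  · rw [if_neg hm]
    have hc : (Complex.I * m : ℂ) ≠ 0 := by
      exact mul_ne_zero Complex.I_ne_zero (by exact_mod_cast hm)
    have h := integral_exp_mul_complex (a := (0:ℝ)) (b := 2*Real.pi) hc
    simp only [mul_assoc] at h ⊢
    rw [h]
    have h1 : Complex.I * ((m:ℂ) * ((2*Real.pi : ℝ):ℂ)) = (m:ℂ) * (2*Real.pi*Complex.I) := by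
      push_cast; ring
    rw [h1, Complex.exp_int_mul_two_pi_mul_I]
    simp

lemma int3 (a b : ℂ) (m₁ m₂ m₃ : ℤ) :
    (∫ x in (0:ℝ)..(2*Real.pi),
      (a * Complex.exp (Complex.I*m₁*x) + b * Complex.exp (Complex.I*m₂*x)
        - b * Complex.exp (Complex.I*m₃*x)))
    = a * (if m₁ = 0 then ((2*Real.pi:ℝ):ℂ) else 0)
      + b * (if m₂ = 0 then ((2*Real.pi:ℝ):ℂ) else 0)
      - b * (if m₃ = 0 then ((2*Real.pi:ℝ):ℂ) else 0) := by
  have h : ∀ (c:ℂ) (m:ℤ), IntervalIntegrable (fun x:ℝ => c * Complex.exp (Complex.I*m*x))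
      volume 0 (2*Real.pi) := fun c m =>
    ((continuous_const.mul (by fun_prop : Continuous fun x:ℝ => Complex.exp (Complex.I*m*x)))).intervalIntegrable _ _
  rw [intervalIntegral.integral_sub ((h a m₁).add (h b m₂)) (h b m₃),
      intervalIntegral.integral_add (h a m₁) (h b m₂),
      intervalIntegral.integral_const_mul, intervalIntegral.integral_const_mul,
      intervalIntegral.integral_const_mul, expInt, expInt, expInt]

lemma hcoef (a b : ℝ) (n : ℕ) (k : ℤ) :
    fourierCoef (fun x => a + b * Real.sin (n*x)) k
    = (((2*Real.pi) ^ (-(1:ℝ)/2) : ℝ) : ℂ) *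
      ((a:ℂ) * (if -k = 0 then ((2*Real.pi:ℝ):ℂ) else 0)
        + ((b:ℂ)/(2*Complex.I)) * (if (n:ℤ) - k = 0 then ((2*Real.pi:ℝ):ℂ) else 0)
        - ((b:ℂ)/(2*Complex.I)) * (if -(n:ℤ) - k = 0 then ((2*Real.pi:ℝ):ℂ) else 0)) := by
  unfold fourierCoef
  rw [← int3]
  congr 1
  apply intervalIntegral.integral_congr
  intro x _
  have hsin : ∀ z : ℂ, Complex.sin z
      = (Complex.exp (Complex.I*z) - Complex.exp (-(Complex.I*z))) / (2*Complex.I) := by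
    intro z
    rw [Complex.sin]
    have hI : (Complex.I : ℂ) ≠ 0 := Complex.I_ne_zero
    field_simp
    ring_nf
    rw [Complex.I_sq]
    ring
  push_cast
  rw [show Complex.I * -(k:ℂ) * x = -Complex.I * k * x by ring]
  rw [show Complex.I * ((n:ℂ) - k) * x = Complex.I*(n:ℂ)*x + -Complex.I*(k:ℂ)*x by ring,
    Complex.exp_add]
  rw [show Complex.I * (-(n:ℂ) - k) * x = -(Complex.I*(n:ℂ)*x) + -Complex.I*(k:ℂ)*x by ring,
    Complex.exp_add]
  rw [show ((n:ℂ)*(x:ℂ)) = ((n:ℂ)*x) from rfl, hsin ((n:ℂ)*x)]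
  have hI : (Complex.I : ℂ) ≠ 0 := Complex.I_ne_zero
  field_simp
  ring

/-- Lower bound for the distance of the two approximate solutions:
`‖u^{1,n}(t) - u^{-1,n}(t)‖_{H^s} ≥ (√π/7)|sin t| - (√(2π)/7) n⁻¹`. -/
theorem statement13 (s : ℝ) (hs : s > 3/2) :
    ∀ t : ℝ, ∀ n : ℕ, 1 ≤ n →
      Real.sqrt Real.pi / 7 * |Real.sin t| - Real.sqrt (2 * Real.pi) / 7 * (n : ℝ)⁻¹ ≤
        sobolevNorm s (fun x => uapprox s 1 n t x - uapprox s (-1) n t x) := by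
  intro t n hn
  have hπ : (0:ℝ) < Real.pi := Real.pi_pos
  have hnR : (0:ℝ) < n := by exact_mod_cast hn
  have hnZ : (1:ℤ) ≤ (n:ℤ) := by exact_mod_cast hn
  set a : ℝ := (n:ℝ)⁻¹ / 7 with ha
  set b : ℝ := (n:ℝ)^(-s) * Real.sin t / 7 with hb
  -- the difference simplifies
  have hf : (fun x => uapprox s 1 n t x - uapprox s (-1) n t x)
      = fun x => a + b * Real.sin ((n:ℝ)*x) := by
    funext x
    simp only [uapprox, ha, hb, one_mul, neg_one_mul]
    rw [Real.cos_add, Real.cos_add, Real.cos_neg, Real.sin_neg]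
    ring
  rw [hf]
  -- the summand
  set g : ℤ → ℝ := fun k => (1 + (k:ℝ)^2)^s * ‖fourierCoef (fun x => a + b * Real.sin ((n:ℝ)*x)) k‖ ^ 2 with hg
  have hg0 : ∀ k : ℤ, k ∉ ({0, (n:ℤ), -(n:ℤ)} : Finset ℤ) → g k = 0 := by
    intro k hk
    simp only [Finset.mem_insert, Finset.mem_singleton] at hk
    push_neg at hk
    obtain ⟨h1, h2, h3⟩ := hk
    simp only [hg, hcoef]
    rw [if_neg (by omega), if_neg (by omega), if_neg (by omega)]
    simp
  have habs : ∀ k : ℤ, (k = (n:ℤ) ∨ k = -(n:ℤ)) →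
      ‖fourierCoef (fun x => a + b * Real.sin ((n:ℝ)*x)) k‖ ^ 2
        = Real.pi * b^2 / 2 := by
    intro k hk
    have hval : ‖fourierCoef (fun x => a + b * Real.sin ((n:ℝ)*x)) k‖
        = (2*Real.pi) ^ (-(1:ℝ)/2) * (|b| / 2 * (2*Real.pi)) := by
      rcases hk with hk | hk
      · subst hk
        rw [hcoef, if_neg (by omega), if_pos (by omega), if_neg (by omega)]
        simp only [mul_zero, zero_add, sub_zero, norm_mul, Complex.norm_real, Real.norm_eq_abs, norm_div,
          Complex.norm_two, Complex.norm_I, mul_one]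
        rw [abs_of_nonneg (by positivity : (0:ℝ) ≤ (2*Real.pi)^(-(1:ℝ)/2)),
          abs_of_nonneg (by norm_num : (0:ℝ) ≤ 2), abs_of_nonneg (le_of_lt hπ)]
      · subst hk
        rw [hcoef, if_neg (by omega), if_neg (by omega), if_pos (by omega)]
        simp only [mul_zero, zero_add, zero_sub, norm_neg, norm_mul, Complex.norm_real, Real.norm_eq_abs,
          norm_div, Complex.norm_two, Complex.norm_I, mul_one]
        rw [abs_of_nonneg (by positivity : (0:ℝ) ≤ (2*Real.pi)^(-(1:ℝ)/2)),
          abs_of_nonneg (by norm_num : (0:ℝ) ≤ 2), abs_of_nonneg (le_of_lt hπ)]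
    rw [hval]
    have h2π : (0:ℝ) < 2*Real.pi := by positivity
    have hr : ((2*Real.pi) ^ (-(1:ℝ)/2))^2 = (2*Real.pi)⁻¹ := by
      rw [← Real.rpow_natCast ((2*Real.pi) ^ (-(1:ℝ)/2)) 2, ← Real.rpow_mul (le_of_lt h2π)]
      norm_num
      rw [Real.rpow_neg_one]
      field_simp
    rw [mul_pow, hr, mul_pow, div_pow, sq_abs]
    field_simp
  have hgn : g (n:ℤ) = (1 + (n:ℝ)^2)^s * (Real.pi * b^2 / 2) := by
    simp only [hg]; rw [habs _ (Or.inl rfl)]; push_cast; ring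
  have hgmn : g (-(n:ℤ)) = (1 + (n:ℝ)^2)^s * (Real.pi * b^2 / 2) := by
    simp only [hg]; rw [habs _ (Or.inr rfl)]; push_cast; ring
  have hsum : Summable g := summable_of_ne_finset_zero hg0
  have hgnonneg : ∀ k, 0 ≤ g k := by
    intro k; simp only [hg]; positivity
  have hne : (n:ℤ) ≠ -(n:ℤ) := by omega
  have hlow : g (n:ℤ) + g (-(n:ℤ)) ≤ ∑' k, g k := by
    have := Summable.sum_le_tsum ({(n:ℤ), -(n:ℤ)} : Finset ℤ) (fun k _ => hgnonneg k) hsum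
    rwa [Finset.sum_pair hne] at this
  have hkey : (1 + (n:ℝ)^2)^s * Real.pi * b^2 ≤ ∑' k, g k := by
    calc (1 + (n:ℝ)^2)^s * Real.pi * b^2 = g (n:ℤ) + g (-(n:ℤ)) := by
          rw [hgn, hgmn]; ring
      _ ≤ _ := hlow
  -- final estimate
  have hmain : Real.sqrt Real.pi / 7 * |Real.sin t| ≤
      sobolevNorm s (fun x => a + b * Real.sin ((n:ℝ)*x)) := by
    unfold sobolevNorm
    rw [show (∑' k : ℤ, (1 + (k:ℝ)^2)^s * ‖fourierCoef (fun x => a + b * Real.sin ((n:ℝ)*x)) k‖ ^ 2) = ∑' k, g k from rfl]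
    rw [Real.le_sqrt (by positivity) (tsum_nonneg hgnonneg)]
    refine le_trans ?_ hkey
    -- (√π/7 |sin t|)² = π sin²t/49 ≤ (1+n²)^s π b²
    have hsq : (Real.sqrt Real.pi / 7 * |Real.sin t|)^2 = Real.pi * (Real.sin t)^2 / 49 := by
      rw [mul_pow, div_pow, Real.sq_sqrt (le_of_lt hπ), sq_abs]; ring
    rw [hsq]
    have hb2 : b^2 = ((n:ℝ)^(-s))^2 * (Real.sin t)^2 / 49 := by rw [hb]; ring
    rw [hb2]
    have hpow : (1:ℝ) ≤ (1 + (n:ℝ)^2)^s * ((n:ℝ)^(-s))^2 := by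
      have h1 : ((n:ℝ)^(-s))^2 = (n:ℝ)^(-(2*s)) := by
        rw [← Real.rpow_natCast ((n:ℝ)^(-s)) 2, ← Real.rpow_mul (le_of_lt hnR)]
        norm_num; ring_nf
      have h2 : ((n:ℝ)^2)^s = (n:ℝ)^(2*s) := by
        rw [← Real.rpow_natCast (n:ℝ) 2, ← Real.rpow_mul (le_of_lt hnR)]
        norm_num
      have h3 : ((n:ℝ)^2)^s ≤ (1 + (n:ℝ)^2)^s :=
        Real.rpow_le_rpow (by positivity) (by linarith) (by linarith)
      calc (1:ℝ) = (n:ℝ)^(2*s) * (n:ℝ)^(-(2*s)) := by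
            rw [← Real.rpow_add hnR]; norm_num
        _ ≤ (1 + (n:ℝ)^2)^s * ((n:ℝ)^(-s))^2 := by
            rw [h1, ← h2]
            exact mul_le_mul_of_nonneg_right h3 (by positivity)
    calc Real.pi * (Real.sin t)^2 / 49
        = 1 * (Real.pi * (Real.sin t)^2 / 49) := by ring
      _ ≤ ((1 + (n:ℝ)^2)^s * ((n:ℝ)^(-s))^2) * (Real.pi * (Real.sin t)^2 / 49) :=
          mul_le_mul_of_nonneg_right hpow (by positivity)
      _ = (1 + (n:ℝ)^2)^s * Real.pi * (((n:ℝ)^(-s))^2 * (Real.sin t)^2 / 49) := by ring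
  have hsub : (0:ℝ) ≤ Real.sqrt (2*Real.pi) / 7 * (n:ℝ)⁻¹ := by positivity
  linarith
end
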